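/- arXiv:2602.01562 — 2 statements merged into one kernel-verified Lean document; each statement's English description precedes it below -/
import Mathlib

section
/- For all integers k1, k2 ≥ 1 with k1 ≤ k2, and every integer r ≥ 1, the local antimagic chromatic number of the edge-corona product of the double star S_{k1,k2} with the graph rK_2 satisfies 4 ≤ χ_la(S_{k1,k2} ⋄ rK_2) ≤ 5. -/
/-!
Local antimagic (total) labelings and chromatic numbers, firecracker graphs,
stars, double stars, joins, and edge-corona products.
-/

open scoped Classical

noncomputable section

namespace LocalAntimagic

variable {V : Type*} [Fintype V]

/-- The weight of a vertex `u` under an edge labeling `f`: the sum of the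
labels of the edges incident with `u`. -/
def weight (G : SimpleGraph V) (f : Sym2 V → ℕ) (u : V) : ℕ :=
  ∑ e ∈ G.edgeFinset, if u ∈ e then f e else 0

/-- `f` is a local antimagic labeling of `G`: it maps the edge set of `G`
bijectively onto `{1, …, |E(G)|}` and adjacent vertices get distinct weights. -/
def IsLocalAntimagic (G : SimpleGraph V) (f : Sym2 V → ℕ) : Prop :=
  Set.BijOn f G.edgeSet (Set.Icc 1 G.edgeFinset.card) ∧
    ∀ u v, G.Adj u v → weight G f u ≠ weight G f v

/-- The number of distinct colors (vertex weights) induced by `f`. -/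
def colorCount (G : SimpleGraph V) (f : Sym2 V → ℕ) : ℕ :=
  (Finset.univ.image (weight G f)).card

/-- The local antimagic chromatic number `χ_la(G)`: the least number of
distinct induced colors over all local antimagic labelings of `G`. -/
def chiLA (G : SimpleGraph V) : ℕ :=
  sInf {c | ∃ f, IsLocalAntimagic G f ∧ colorCount G f = c}

/-- The total weight of a vertex `u` under a total labeling `(gv, ge)`:
`gv u` plus the sum of the labels of the edges incident with `u`. -/
def totalWeight (G : SimpleGraph V) (gv : V → ℕ) (ge : Sym2 V → ℕ) (u : V) : ℕ :=
  gv u + weight G ge u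

/-- `(gv, ge)` is a local antimagic total labeling of `G`: together the vertex
labels and edge labels form a bijection from `V(G) ∪ E(G)` onto
`{1, …, |V(G)| + |E(G)|}`, and adjacent vertices get distinct total weights. -/
def IsLocalAntimagicTotal (G : SimpleGraph V) (gv : V → ℕ) (ge : Sym2 V → ℕ) : Prop :=
  Set.BijOn (Sum.elim gv ge)
    (Set.range Sum.inl ∪ Sum.inr '' G.edgeSet)
    (Set.Icc 1 (Fintype.card V + G.edgeFinset.card)) ∧
    ∀ u v, G.Adj u v → totalWeight G gv ge u ≠ totalWeight G gv ge v

/-- The number of distinct colors (total vertex weights) induced by `(gv, ge)`. -/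
def totalColorCount (G : SimpleGraph V) (gv : V → ℕ) (ge : Sym2 V → ℕ) : ℕ :=
  (Finset.univ.image (totalWeight G gv ge)).card

/-- The local antimagic total chromatic number `χ_lat(G)`. -/
def chiLAT (G : SimpleGraph V) : ℕ :=
  sInf {c | ∃ gv ge, IsLocalAntimagicTotal G gv ge ∧ totalColorCount G gv ge = c}

/-- The double star `S_{k₁,k₂}`: two adjacent centers `Sum.inl (Sum.inl ())`
and `Sum.inl (Sum.inr ())`, the first with `k₁` pendant leaves and the second
with `k₂` pendant leaves. -/
def doubleStar (k₁ k₂ : ℕ) : SimpleGraph ((Unit ⊕ Unit) ⊕ (Fin k₁ ⊕ Fin k₂)) :=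
  SimpleGraph.fromRel (fun a b =>
    match a, b with
    | Sum.inl (Sum.inl _), Sum.inl (Sum.inr _) => True
    | Sum.inl (Sum.inl _), Sum.inr (Sum.inl _) => True
    | Sum.inl (Sum.inr _), Sum.inr (Sum.inr _) => True
    | _, _ => False)

/-- The matching `rK₂`: the disjoint union of `r` copies of `K₂`, i.e.
`(i, 0)` and `(i, 1)` are adjacent for each `i`, and nothing else. -/
def matching (r : ℕ) : SimpleGraph (Fin r × Fin 2) :=
  SimpleGraph.fromRel (fun a b => a.1 = b.1)

/-- The edge-corona product `G ⋄ H`: take one copy of `G` and one disjoint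
copy of `H` for each edge `e` of `G`, joining both endpoints of `e` to every
vertex of the copy of `H` assigned to `e`. -/
def edgeCorona {W : Type*} (G : SimpleGraph V) (H : SimpleGraph W) :
    SimpleGraph (V ⊕ (G.edgeSet × W)) :=
  SimpleGraph.fromRel (fun a b =>
    match a, b with
    | Sum.inl u, Sum.inl v => G.Adj u v
    | Sum.inl u, Sum.inr (e, _) => u ∈ (e : Sym2 V)
    | Sum.inr (e, w), Sum.inr (e', w') => e = e' ∧ H.Adj w w'
    | _, _ => False)

section Aux

variable (k₁ k₂ r : ℕ)

/-- Index type for the tree edges of the double star. -/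
abbrev TI := Unit ⊕ (Fin k₁ ⊕ Fin k₂)

def c1 : (Unit ⊕ Unit) ⊕ (Fin k₁ ⊕ Fin k₂) := Sum.inl (Sum.inl ())
def c2 : (Unit ⊕ Unit) ⊕ (Fin k₁ ⊕ Fin k₂) := Sum.inl (Sum.inr ())

/-- center-side endpoint of tree edge `j` -/
def csd : TI k₁ k₂ → (Unit ⊕ Unit) ⊕ (Fin k₁ ⊕ Fin k₂)
  | Sum.inl _ => c1 k₁ k₂
  | Sum.inr (Sum.inl _) => c1 k₁ k₂
  | Sum.inr (Sum.inr _) => c2 k₁ k₂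

/-- other endpoint of tree edge `j` -/
def lsd : TI k₁ k₂ → (Unit ⊕ Unit) ⊕ (Fin k₁ ⊕ Fin k₂)
  | Sum.inl _ => c2 k₁ k₂
  | Sum.inr l => Sum.inr l

/-- numeric index of a tree edge -/
def η : TI k₁ k₂ → ℕ
  | Sum.inl _ => 0
  | Sum.inr (Sum.inl x) => (x : ℕ) + 1
  | Sum.inr (Sum.inr y) => k₁ + 1 + (y : ℕ)

def nn : ℕ := k₁ + k₂ + 1
def NN : ℕ := nn k₁ k₂ * r

def permA (e : ℕ) : ℕ := if e % 2 = 0 then e / 2 else e / 2 + (nn k₁ k₂ + 1) / 2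

def permB (e : ℕ) : ℕ :=
  if e = 0 then (if nn k₁ k₂ % 2 = 0 then nn k₁ k₂ - 1 else (nn k₁ k₂ - 1) / 2)
  else if e % 2 = 0 then e / 2 + (nn k₁ k₂ - 1) / 2 else e / 2

def perm (i e : ℕ) : ℕ :=
  if i = 0 then (if r % 2 = 1 then e else permA k₁ k₂ e)
  else if i = 1 ∧ r % 2 = 0 then permB k₁ k₂ e
  else if i % 2 = 0 then e else nn k₁ k₂ - 1 - e

def sVal (e i : ℕ) : ℕ := i * nn k₁ k₂ + perm k₁ k₂ r i e + 1

def labC (s : ℕ) : ℕ := 3 * NN k₁ k₂ r + 1 - 2 * s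
def labB (s : ℕ) : ℕ := 4 * NN k₁ k₂ r + s
def labA (s : ℕ) : ℕ := 3 * NN k₁ k₂ r + s
def labD (s : ℕ) : ℕ := 3 * NN k₁ k₂ r + 2 - 2 * s
def ptree (e : ℕ) : ℕ := if e = 0 then 5 * NN k₁ k₂ r + nn k₁ k₂ else 5 * NN k₁ k₂ r + e

def tedge (j : TI k₁ k₂) : Sym2 ((Unit ⊕ Unit) ⊕ (Fin k₁ ⊕ Fin k₂)) :=
  s(csd k₁ k₂ j, lsd k₁ k₂ j)

lemma csd_ne_lsd (j : TI k₁ k₂) : csd k₁ k₂ j ≠ lsd k₁ k₂ j := by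
  rcases j with _ | (x | y) <;> simp [csd, lsd, c1, c2]

lemma adj_tree (j : TI k₁ k₂) : (doubleStar k₁ k₂).Adj (csd k₁ k₂ j) (lsd k₁ k₂ j) := by
  rcases j with _ | (x | y) <;>
    simp [doubleStar, SimpleGraph.fromRel_adj, csd, lsd, c1, c2]

lemma tedge_mem (j : TI k₁ k₂) : tedge k₁ k₂ j ∈ (doubleStar k₁ k₂).edgeSet := by
  rw [tedge, SimpleGraph.mem_edgeSet]; exact adj_tree k₁ k₂ j

def te (j : TI k₁ k₂) : (doubleStar k₁ k₂).edgeSet := ⟨tedge k₁ k₂ j, tedge_mem k₁ k₂ j⟩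

def η₂ : ((Unit ⊕ Unit) ⊕ (Fin k₁ ⊕ Fin k₂)) → ((Unit ⊕ Unit) ⊕ (Fin k₁ ⊕ Fin k₂)) → ℕ
  | Sum.inl (Sum.inl _), Sum.inl (Sum.inr _) => 0
  | Sum.inl (Sum.inr _), Sum.inl (Sum.inl _) => 0
  | Sum.inl (Sum.inl _), Sum.inr (Sum.inl x) => (x : ℕ) + 1
  | Sum.inr (Sum.inl x), Sum.inl (Sum.inl _) => (x : ℕ) + 1
  | Sum.inl (Sum.inr _), Sum.inr (Sum.inr y) => k₁ + 1 + (y : ℕ)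
  | Sum.inr (Sum.inr y), Sum.inl (Sum.inr _) => k₁ + 1 + (y : ℕ)
  | _, _ => 0

lemma η₂_symm : ∀ a b, η₂ k₁ k₂ a b = η₂ k₁ k₂ b a := by
  rintro ((_ | _) | (x | y)) ((_ | _) | (x' | y')) <;> rfl

def ηS : Sym2 ((Unit ⊕ Unit) ⊕ (Fin k₁ ⊕ Fin k₂)) → ℕ :=
  Sym2.lift ⟨η₂ k₁ k₂, η₂_symm k₁ k₂⟩

lemma ηS_tedge (j : TI k₁ k₂) : ηS k₁ k₂ (tedge k₁ k₂ j) = η k₁ k₂ j := by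
  rcases j with _ | (x | y) <;> rfl

def isCtr (u : (Unit ⊕ Unit) ⊕ (Fin k₁ ⊕ Fin k₂)) (e : ℕ) : Prop :=
  u = c1 k₁ k₂ ∨ (u = c2 k₁ k₂ ∧ 0 < e)

def joinL (u : (Unit ⊕ Unit) ⊕ (Fin k₁ ⊕ Fin k₂))
    (E : Sym2 ((Unit ⊕ Unit) ⊕ (Fin k₁ ⊕ Fin k₂))) (i : Fin r) (b : Fin 2) : ℕ :=
  if isCtr k₁ k₂ u (ηS k₁ k₂ E) then
    (if b = 0 then labC k₁ k₂ r (sVal k₁ k₂ r (ηS k₁ k₂ E) i)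
     else labB k₁ k₂ r (sVal k₁ k₂ r (ηS k₁ k₂ E) i))
  else
    (if b = 0 then labA k₁ k₂ r (sVal k₁ k₂ r (ηS k₁ k₂ E) i)
     else labD k₁ k₂ r (sVal k₁ k₂ r (ηS k₁ k₂ E) i))

abbrev VV := ((Unit ⊕ Unit) ⊕ (Fin k₁ ⊕ Fin k₂)) ⊕ ((doubleStar k₁ k₂).edgeSet × (Fin r × Fin 2))

def FF : VV k₁ k₂ r → VV k₁ k₂ r → ℕ
  | Sum.inl u, Sum.inl v => ptree k₁ k₂ r (η₂ k₁ k₂ u v)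
  | Sum.inl u, Sum.inr (E, (i, b)) => joinL k₁ k₂ r u E.1 i b
  | Sum.inr (E, (i, b)), Sum.inl u => joinL k₁ k₂ r u E.1 i b
  | Sum.inr (E, (i, b)), Sum.inr (E', (i', b')) =>
      if E.1 = E'.1 ∧ i = i' ∧ b ≠ b' then sVal k₁ k₂ r (ηS k₁ k₂ E.1) i else 0

lemma FF_symm : ∀ a b, FF k₁ k₂ r a b = FF k₁ k₂ r b a := by
  rintro (u | ⟨E, i, b⟩) (v | ⟨E', i', b'⟩)
  · simp only [FF]; rw [η₂_symm]
  · rfl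
  · rfl
  · simp only [FF]
    by_cases h : E.1 = E'.1 ∧ i = i' ∧ b ≠ b'
    · rw [if_pos h, if_pos ⟨h.1.symm, h.2.1.symm, Ne.symm h.2.2⟩, h.1, h.2.1]
    · rw [if_neg h, if_neg (fun h' => h ⟨h'.1.symm, h'.2.1.symm, Ne.symm h'.2.2⟩)]

def ff : Sym2 (VV k₁ k₂ r) → ℕ := Sym2.lift ⟨FF k₁ k₂ r, FF_symm k₁ k₂ r⟩

def w0v (j : TI k₁ k₂) (i : Fin r) : VV k₁ k₂ r := Sum.inr (te k₁ k₂ j, (i, 0))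
def w1v (j : TI k₁ k₂) (i : Fin r) : VV k₁ k₂ r := Sum.inr (te k₁ k₂ j, (i, 1))
def uCv (j : TI k₁ k₂) : VV k₁ k₂ r := Sum.inl (csd k₁ k₂ j)
def uLv (j : TI k₁ k₂) : VV k₁ k₂ r := Sum.inl (lsd k₁ k₂ j)

abbrev Idx := TI k₁ k₂ ⊕ (TI k₁ k₂ × Fin r × Fin 5)

def ι : Idx k₁ k₂ r → Sym2 (VV k₁ k₂ r)
  | Sum.inl j => s(uCv k₁ k₂ r j, uLv k₁ k₂ r j)
  | Sum.inr (j, i, q) =>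
      ![s(w0v k₁ k₂ r j i, w1v k₁ k₂ r j i),
        s(uCv k₁ k₂ r j, w0v k₁ k₂ r j i),
        s(uCv k₁ k₂ r j, w1v k₁ k₂ r j i),
        s(uLv k₁ k₂ r j, w0v k₁ k₂ r j i),
        s(uLv k₁ k₂ r j, w1v k₁ k₂ r j i)] q

def lab : Idx k₁ k₂ r → ℕ
  | Sum.inl j => ptree k₁ k₂ r (η k₁ k₂ j)
  | Sum.inr (j, i, q) =>
      ![sVal k₁ k₂ r (η k₁ k₂ j) i,
        labC k₁ k₂ r (sVal k₁ k₂ r (η k₁ k₂ j) i),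
        labB k₁ k₂ r (sVal k₁ k₂ r (η k₁ k₂ j) i),
        labA k₁ k₂ r (sVal k₁ k₂ r (η k₁ k₂ j) i),
        labD k₁ k₂ r (sVal k₁ k₂ r (η k₁ k₂ j) i)] q

end Aux


section Arith

variable (k₁ k₂ r : ℕ)

lemma nn_def : nn k₁ k₂ = k₁ + k₂ + 1 := rfl

lemma permA_lt {e : ℕ} (he : e < nn k₁ k₂) : permA k₁ k₂ e < nn k₁ k₂ := by
  have h := nn_def k₁ k₂
  unfold permA; split_ifs <;> omega

lemma permB_lt {e : ℕ} (he : e < nn k₁ k₂) : permB k₁ k₂ e < nn k₁ k₂ := by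
  have h := nn_def k₁ k₂
  unfold permB; split_ifs <;> omega

lemma perm_lt {i e : ℕ} (he : e < nn k₁ k₂) : perm k₁ k₂ r i e < nn k₁ k₂ := by
  have h := nn_def k₁ k₂
  have hA := permA_lt k₁ k₂ he
  have hB := permB_lt k₁ k₂ he
  unfold perm; split_ifs <;> omega

lemma permA_inj {e e' : ℕ} (he : e < nn k₁ k₂) (he' : e' < nn k₁ k₂)
    (h : permA k₁ k₂ e = permA k₁ k₂ e') : e = e' := by
  have hn := nn_def k₁ k₂
  unfold permA at h; split_ifs at h <;> omega

lemma permB_inj {e e' : ℕ} (he : e < nn k₁ k₂) (he' : e' < nn k₁ k₂)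
    (h : permB k₁ k₂ e = permB k₁ k₂ e') : e = e' := by
  have hn := nn_def k₁ k₂
  unfold permB at h; split_ifs at h <;> omega

lemma perm_inj {i e e' : ℕ} (he : e < nn k₁ k₂) (he' : e' < nn k₁ k₂)
    (h : perm k₁ k₂ r i e = perm k₁ k₂ r i e') : e = e' := by
  have hn := nn_def k₁ k₂
  unfold perm at h; split_ifs at h
  · exact h
  · exact permA_inj k₁ k₂ he he' h
  · exact permB_inj k₁ k₂ he he' h
  · exact h
  · omega

lemma AB_sum {e : ℕ} (h1 : 1 ≤ e) (he : e < nn k₁ k₂) :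
    permA k₁ k₂ e + permB k₁ k₂ e = e + (nn k₁ k₂ - 1) / 2 := by
  have hn := nn_def k₁ k₂
  unfold permA permB; split_ifs <;> omega

lemma altsum {e : ℕ} (he : e < nn k₁ k₂) (q a : ℕ) :
    ∑ i ∈ Finset.Ico a (a + 2 * q), (if i % 2 = 0 then e else nn k₁ k₂ - 1 - e)
      = q * (nn k₁ k₂ - 1) := by
  induction q generalizing a with
  | zero => simp
  | succ q ih =>
    have h1 : a + 2 * (q + 1) = (a + 2 * q) + 1 + 1 := by omega
    rw [h1, Finset.sum_Ico_succ_top (by omega), Finset.sum_Ico_succ_top (by omega), ih a,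
      Nat.succ_mul]
    have hmul : (q+1) * (nn k₁ k₂ - 1) = q * (nn k₁ k₂ - 1) + (nn k₁ k₂ - 1) := by ring
    split_ifs <;> omega

def CP : ℕ :=
  if r % 2 = 1 then ((r - 1) / 2) * (nn k₁ k₂ - 1)
  else (nn k₁ k₂ - 1) / 2 + ((r - 2) / 2) * (nn k₁ k₂ - 1)

lemma perm_sum (hr : 1 ≤ r) {e : ℕ} (h1 : 1 ≤ e) (he : e < nn k₁ k₂) :
    ∑ i ∈ Finset.range r, perm k₁ k₂ r i e = e + CP k₁ k₂ r := by
  have hn := nn_def k₁ k₂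
  rcases Nat.even_or_odd r with hev | hod
  · -- r even
    obtain ⟨q, hq⟩ : ∃ q, r = 2 + 2 * q := by
      rcases hev with ⟨c, hc⟩; exact ⟨c - 1, by omega⟩
    have hr2 : r % 2 = 0 := by omega
    have key : ∑ i ∈ Finset.Ico 2 r, perm k₁ k₂ r i e
        = ∑ i ∈ Finset.Ico 2 (2 + 2 * q), (if i % 2 = 0 then e else nn k₁ k₂ - 1 - e) := by
      rw [← hq]
      refine Finset.sum_congr rfl (fun i hi => ?_)
      have hi2 : 2 ≤ i := (Finset.mem_Ico.mp hi).1
      unfold perm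
      rw [if_neg (by omega), if_neg (by push_neg; intro h; omega)]
    rw [Finset.range_eq_Ico, ← Finset.sum_Ico_consecutive _ (by omega : 0 ≤ 2) (by omega : 2 ≤ r),
      key, altsum k₁ k₂ he]
    have h01 : ∑ i ∈ Finset.Ico 0 2, perm k₁ k₂ r i e
        = perm k₁ k₂ r 0 e + perm k₁ k₂ r 1 e := by
      rw [show Finset.Ico 0 2 = {0, 1} from rfl]
      simp
    rw [h01]
    have hp0 : perm k₁ k₂ r 0 e = permA k₁ k₂ e := by unfold perm; rw [if_pos rfl, if_neg (by omega)]
    have hp1 : perm k₁ k₂ r 1 e = permB k₁ k₂ e := by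
      unfold perm; rw [if_neg (by omega), if_pos ⟨rfl, hr2⟩]
    rw [hp0, hp1]
    have hAB := AB_sum k₁ k₂ h1 he
    unfold CP; rw [if_neg (by omega)]
    have : (r - 2) / 2 = q := by omega
    rw [this]; omega
  · -- r odd
    obtain ⟨q, hq⟩ : ∃ q, r = 1 + 2 * q := by rcases hod with ⟨c, hc⟩; exact ⟨c, by omega⟩
    have hr2 : r % 2 = 1 := by omega
    have key : ∑ i ∈ Finset.Ico 1 r, perm k₁ k₂ r i e
        = ∑ i ∈ Finset.Ico 1 (1 + 2 * q), (if i % 2 = 0 then e else nn k₁ k₂ - 1 - e) := by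
      rw [← hq]
      refine Finset.sum_congr rfl (fun i hi => ?_)
      have hi1 : 1 ≤ i := (Finset.mem_Ico.mp hi).1
      unfold perm
      rw [if_neg (by omega), if_neg (by push_neg; intro h; omega)]
    rw [Finset.range_eq_Ico, ← Finset.sum_Ico_consecutive _ (by omega : 0 ≤ 1) (by omega : 1 ≤ r),
      key, altsum k₁ k₂ he]
    have h0 : ∑ i ∈ Finset.Ico 0 1, perm k₁ k₂ r i e = perm k₁ k₂ r 0 e := by simp
    rw [h0]
    have hp0 : perm k₁ k₂ r 0 e = e := by unfold perm; rw [if_pos rfl, if_pos hr2]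
    rw [hp0]
    unfold CP; rw [if_pos hr2]
    have : (r - 1) / 2 = q := by omega
    rw [this]

def Tsum (e : ℕ) : ℕ := ∑ i ∈ Finset.range r, sVal k₁ k₂ r e i

def Cσ : ℕ := (∑ i ∈ Finset.range r, (i * nn k₁ k₂ + 1)) + CP k₁ k₂ r

lemma Tsum_eq (hr : 1 ≤ r) {e : ℕ} (h1 : 1 ≤ e) (he : e < nn k₁ k₂) :
    Tsum k₁ k₂ r e = Cσ k₁ k₂ r + e := by
  unfold Tsum Cσ
  have : ∀ i ∈ Finset.range r, sVal k₁ k₂ r e i = (i * nn k₁ k₂ + 1) + perm k₁ k₂ r i e := by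
    intro i _; unfold sVal; omega
  rw [Finset.sum_congr rfl this, Finset.sum_add_distrib, perm_sum k₁ k₂ r hr h1 he]
  omega

lemma sVal_pos (e i : ℕ) : 1 ≤ sVal k₁ k₂ r e i := by unfold sVal; omega

lemma sVal_le {e i : ℕ} (he : e < nn k₁ k₂) (hi : i < r) :
    sVal k₁ k₂ r e i ≤ NN k₁ k₂ r := by
  have hp := perm_lt k₁ k₂ r (i := i) he
  have h2 : i * nn k₁ k₂ + nn k₁ k₂ ≤ r * nn k₁ k₂ := by
    calc i * nn k₁ k₂ + nn k₁ k₂ = (i + 1) * nn k₁ k₂ := by ring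
    _ ≤ r * nn k₁ k₂ := Nat.mul_le_mul_right _ (by omega)
  have h3 : NN k₁ k₂ r = r * nn k₁ k₂ := Nat.mul_comm _ _
  unfold sVal; omega

lemma Tsum_le {e : ℕ} (he : e < nn k₁ k₂) : Tsum k₁ k₂ r e ≤ r * NN k₁ k₂ r := by
  unfold Tsum
  calc ∑ i ∈ Finset.range r, sVal k₁ k₂ r e i
      ≤ ∑ _i ∈ Finset.range r, NN k₁ k₂ r :=
        Finset.sum_le_sum (fun i hi => sVal_le k₁ k₂ r he (Finset.mem_range.mp hi))
  _ = r * NN k₁ k₂ r := by rw [Finset.sum_const, Finset.card_range, smul_eq_mul]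

lemma sVal_inj {e e' i i' : ℕ} (he : e < nn k₁ k₂) (he' : e' < nn k₁ k₂)
    (h : sVal k₁ k₂ r e i = sVal k₁ k₂ r e' i') : e = e' ∧ i = i' := by
  have hp := perm_lt k₁ k₂ r (i := i) he
  have hp' := perm_lt k₁ k₂ r (i := i') he'
  have hii : i = i' := by
    rcases Nat.lt_trichotomy i i' with hlt | heq | hgt
    · exfalso
      have h4 : (i + 1) * nn k₁ k₂ ≤ i' * nn k₁ k₂ := Nat.mul_le_mul_right _ (by omega)
      have h5 : (i + 1) * nn k₁ k₂ = i * nn k₁ k₂ + nn k₁ k₂ := by ring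
      unfold sVal at h; omega
    · exact heq
    · exfalso
      have h4 : (i' + 1) * nn k₁ k₂ ≤ i * nn k₁ k₂ := Nat.mul_le_mul_right _ (by omega)
      have h5 : (i' + 1) * nn k₁ k₂ = i' * nn k₁ k₂ + nn k₁ k₂ := by ring
      unfold sVal at h; omega
  subst hii
  refine ⟨perm_inj k₁ k₂ r (i := i) he he' ?_, rfl⟩
  unfold sVal at h; omega

end Arith


section GraphAux

variable (k₁ k₂ r : ℕ)

abbrev GG := edgeCorona (doubleStar k₁ k₂) (matching r)

lemma η_lt (j : TI k₁ k₂) : η k₁ k₂ j < nn k₁ k₂ := by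
  have hn := nn_def k₁ k₂
  rcases j with _ | (x | y)
  · simp only [η]; omega
  · have := x.isLt; simp only [η]; omega
  · have := y.isLt; simp only [η]; omega

lemma η_inj {j j' : TI k₁ k₂} (h : η k₁ k₂ j = η k₁ k₂ j') : j = j' := by
  rcases j with ⟨⟩ | (x | y) <;> rcases j' with ⟨⟩ | (x' | y') <;> simp only [η] at h
  · rfl
  · exact absurd h (by omega)
  · exact absurd h (by omega)
  · exact absurd h (by omega)
  · simp only [Sum.inr.injEq, Sum.inl.injEq]; exact Fin.ext (by omega)
  · exact absurd h (by have := x.isLt; omega)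
  · exact absurd h (by omega)
  · exact absurd h (by have := x'.isLt; omega)
  · simp only [Sum.inr.injEq, Sum.inr.injEq]; exact Fin.ext (by omega)

lemma tedge_inj {j j' : TI k₁ k₂} (h : tedge k₁ k₂ j = tedge k₁ k₂ j') : j = j' :=
  η_inj k₁ k₂ (by rw [← ηS_tedge, ← ηS_tedge, h])

lemma te_inj {j j' : TI k₁ k₂} (h : te k₁ k₂ j = te k₁ k₂ j') : j = j' :=
  tedge_inj k₁ k₂ (congrArg Subtype.val h)

@[simp] lemma te_eq_iff {j j' : TI k₁ k₂} : te k₁ k₂ j = te k₁ k₂ j' ↔ j = j' :=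
  ⟨te_inj k₁ k₂, by rintro rfl; rfl⟩

lemma adj_CL (j : TI k₁ k₂) : (GG k₁ k₂ r).Adj (uCv k₁ k₂ r j) (uLv k₁ k₂ r j) := by
  refine (SimpleGraph.fromRel_adj _ _ _).mpr ⟨?_, Or.inl (adj_tree k₁ k₂ j)⟩
  simp only [uCv, uLv, ne_eq, Sum.inl.injEq]
  exact csd_ne_lsd k₁ k₂ j

lemma adj_C0 (j : TI k₁ k₂) (i : Fin r) :
    (GG k₁ k₂ r).Adj (uCv k₁ k₂ r j) (w0v k₁ k₂ r j i) :=
  (SimpleGraph.fromRel_adj _ _ _).mpr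
    ⟨by simp [uCv, w0v], Or.inl (Sym2.mem_mk_left _ _)⟩

lemma adj_C1 (j : TI k₁ k₂) (i : Fin r) :
    (GG k₁ k₂ r).Adj (uCv k₁ k₂ r j) (w1v k₁ k₂ r j i) :=
  (SimpleGraph.fromRel_adj _ _ _).mpr
    ⟨by simp [uCv, w1v], Or.inl (Sym2.mem_mk_left _ _)⟩

lemma adj_L0 (j : TI k₁ k₂) (i : Fin r) :
    (GG k₁ k₂ r).Adj (uLv k₁ k₂ r j) (w0v k₁ k₂ r j i) :=
  (SimpleGraph.fromRel_adj _ _ _).mpr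
    ⟨by simp [uLv, w0v], Or.inl (Sym2.mem_mk_right _ _)⟩

lemma adj_L1 (j : TI k₁ k₂) (i : Fin r) :
    (GG k₁ k₂ r).Adj (uLv k₁ k₂ r j) (w1v k₁ k₂ r j i) :=
  (SimpleGraph.fromRel_adj _ _ _).mpr
    ⟨by simp [uLv, w1v], Or.inl (Sym2.mem_mk_right _ _)⟩

lemma adj_01 (j : TI k₁ k₂) (i : Fin r) :
    (GG k₁ k₂ r).Adj (w0v k₁ k₂ r j i) (w1v k₁ k₂ r j i) := by
  refine (SimpleGraph.fromRel_adj _ _ _).mpr ⟨?_, Or.inl ⟨rfl, ?_⟩⟩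
  · simp only [w0v, w1v, ne_eq, Sum.inr.injEq, Prod.mk.injEq]
    intro h
    exact absurd h.2.2 (by decide)
  · exact (SimpleGraph.fromRel_adj _ _ _).mpr ⟨by simp, Or.inl rfl⟩

lemma ι_mem (idx : Idx k₁ k₂ r) : ι k₁ k₂ r idx ∈ (GG k₁ k₂ r).edgeSet := by
  rcases idx with j | ⟨j, i, q⟩
  · exact (SimpleGraph.mem_edgeSet _).mpr (adj_CL k₁ k₂ r j)
  · fin_cases q
    · exact (SimpleGraph.mem_edgeSet _).mpr (adj_01 k₁ k₂ r j i)
    · exact (SimpleGraph.mem_edgeSet _).mpr (adj_C0 k₁ k₂ r j i)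
    · exact (SimpleGraph.mem_edgeSet _).mpr (adj_C1 k₁ k₂ r j i)
    · exact (SimpleGraph.mem_edgeSet _).mpr (adj_L0 k₁ k₂ r j i)
    · exact (SimpleGraph.mem_edgeSet _).mpr (adj_L1 k₁ k₂ r j i)

lemma G0_repr (E : (doubleStar k₁ k₂).edgeSet) : ∃ j : TI k₁ k₂, E = te k₁ k₂ j := by
  obtain ⟨E, hE⟩ := E
  induction E using Sym2.ind with
  | _ u v =>
    rw [SimpleGraph.mem_edgeSet] at hE
    obtain ⟨hne, hrel⟩ := (SimpleGraph.fromRel_adj _ _ _).mp hE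
    rcases u with (⟨⟩ | ⟨⟩) | (x | y) <;> rcases v with (⟨⟩ | ⟨⟩) | (x' | y')
    · exact absurd rfl hne
    · exact ⟨Sum.inl (), Subtype.ext rfl⟩
    · exact ⟨Sum.inr (Sum.inl x'), Subtype.ext rfl⟩
    · exact hrel.elim (fun h => h.elim) (fun h => h.elim)
    · exact ⟨Sum.inl (), Subtype.ext Sym2.eq_swap⟩
    · exact absurd rfl hne
    · exact hrel.elim (fun h => h.elim) (fun h => h.elim)
    · exact ⟨Sum.inr (Sum.inr y'), Subtype.ext rfl⟩
    · exact ⟨Sum.inr (Sum.inl x), Subtype.ext Sym2.eq_swap⟩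
    · exact hrel.elim (fun h => h.elim) (fun h => h.elim)
    · exact hrel.elim (fun h => h.elim) (fun h => h.elim)
    · exact hrel.elim (fun h => h.elim) (fun h => h.elim)
    · exact hrel.elim (fun h => h.elim) (fun h => h.elim)
    · exact ⟨Sum.inr (Sum.inr y), Subtype.ext Sym2.eq_swap⟩
    · exact hrel.elim (fun h => h.elim) (fun h => h.elim)
    · exact hrel.elim (fun h => h.elim) (fun h => h.elim)

lemma GG_repr (E : Sym2 (VV k₁ k₂ r)) (hE : E ∈ (GG k₁ k₂ r).edgeSet) :
    ∃ idx, ι k₁ k₂ r idx = E := by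
  induction E using Sym2.ind with
  | _ a b =>
    rw [SimpleGraph.mem_edgeSet] at hE
    obtain ⟨hne, hrel⟩ := (SimpleGraph.fromRel_adj _ _ _).mp hE
    rcases a with u | ⟨E1, i, c⟩ <;> rcases b with v | ⟨E2, i', c'⟩
    · -- tree edge
      have hadj : (doubleStar k₁ k₂).Adj u v := by
        rcases hrel with h | h
        · exact h
        · exact h.symm
      obtain ⟨j, hj⟩ := G0_repr k₁ k₂ ⟨s(u, v), (SimpleGraph.mem_edgeSet _).mpr hadj⟩
      refine ⟨Sum.inl j, ?_⟩
      have h1 : s(u, v) = tedge k₁ k₂ j := congrArg Subtype.val hj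
      show s(uCv k₁ k₂ r j, uLv k₁ k₂ r j) = s(Sum.inl u, Sum.inl v)
      have h2 : s((Sum.inl u : VV k₁ k₂ r), Sum.inl v) = Sym2.map Sum.inl s(u, v) :=
        (Sym2.map_pair_eq _ _ _).symm
      rw [h2, h1]; rfl
    · -- join edge, vertex first
      have hu : u ∈ (E2.1 : Sym2 _) := hrel.elim id (fun h => h.elim)
      obtain ⟨j, rfl⟩ := G0_repr k₁ k₂ E2
      rw [show (te k₁ k₂ j).1 = s(csd k₁ k₂ j, lsd k₁ k₂ j) from rfl, Sym2.mem_iff] at hu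
      rcases hu with rfl | rfl <;> fin_cases c'
      · exact ⟨Sum.inr (j, i', 1), rfl⟩
      · exact ⟨Sum.inr (j, i', 2), rfl⟩
      · exact ⟨Sum.inr (j, i', 3), rfl⟩
      · exact ⟨Sum.inr (j, i', 4), rfl⟩
    · -- join edge, vertex second
      have hv : v ∈ (E1.1 : Sym2 _) := hrel.elim (fun h => h.elim) id
      obtain ⟨j, rfl⟩ := G0_repr k₁ k₂ E1
      rw [show (te k₁ k₂ j).1 = s(csd k₁ k₂ j, lsd k₁ k₂ j) from rfl, Sym2.mem_iff] at hv
      rcases hv with rfl | rfl <;> fin_cases c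
      · exact ⟨Sum.inr (j, i, 1), Sym2.eq_swap⟩
      · exact ⟨Sum.inr (j, i, 2), Sym2.eq_swap⟩
      · exact ⟨Sum.inr (j, i, 3), Sym2.eq_swap⟩
      · exact ⟨Sum.inr (j, i, 4), Sym2.eq_swap⟩
    · -- matching edge
      have hp : E1 = E2 ∧ i = i' := by
        rcases hrel with ⟨h1, h2⟩ | ⟨h1, h2⟩
        · obtain ⟨-, hf⟩ := (SimpleGraph.fromRel_adj _ _ _).mp h2
          exact ⟨h1, by rcases hf with h | h; exacts [h, h.symm]⟩
        · obtain ⟨-, hf⟩ := (SimpleGraph.fromRel_adj _ _ _).mp h2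
          exact ⟨h1.symm, by rcases hf with h | h; exacts [h.symm, h]⟩
      obtain ⟨rfl, rfl⟩ := hp
      have hcc : c ≠ c' := by
        rintro rfl
        exact hne rfl
      obtain ⟨j, rfl⟩ := G0_repr k₁ k₂ E1
      fin_cases c <;> fin_cases c'
      · exact absurd rfl hcc
      · exact ⟨Sum.inr (j, i, 0), rfl⟩
      · exact ⟨Sum.inr (j, i, 0), Sym2.eq_swap⟩
      · exact absurd rfl hcc

lemma isCtr_csd (j : TI k₁ k₂) : isCtr k₁ k₂ (csd k₁ k₂ j) (η k₁ k₂ j) := by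
  rcases j with _ | (x | y)
  · exact Or.inl rfl
  · exact Or.inl rfl
  · exact Or.inr ⟨rfl, by simp only [η]; omega⟩

lemma not_isCtr_lsd (j : TI k₁ k₂) : ¬ isCtr k₁ k₂ (lsd k₁ k₂ j) (η k₁ k₂ j) := by
  rcases j with _ | (x | y)
  · rintro (h | ⟨h, h0⟩)
    · exact absurd h (by simp [lsd, c1, c2])
    · simp [η] at h0
  · rintro (h | ⟨h, h0⟩) <;> simp [lsd, c1, c2] at h
  · rintro (h | ⟨h, h0⟩) <;> simp [lsd, c1, c2] at h

lemma ff_ι (idx : Idx k₁ k₂ r) : ff k₁ k₂ r (ι k₁ k₂ r idx) = lab k₁ k₂ r idx := by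
  rcases idx with j | ⟨j, i, q⟩
  · show FF k₁ k₂ r (uCv k₁ k₂ r j) (uLv k₁ k₂ r j) = ptree k₁ k₂ r (η k₁ k₂ j)
    rcases j with _ | (x | y) <;> rfl
  · fin_cases q
    · show FF k₁ k₂ r (w0v k₁ k₂ r j i) (w1v k₁ k₂ r j i) = sVal k₁ k₂ r (η k₁ k₂ j) i
      show (if (te k₁ k₂ j).1 = (te k₁ k₂ j).1 ∧ i = i ∧ (0 : Fin 2) ≠ (1 : Fin 2)
        then sVal k₁ k₂ r (ηS k₁ k₂ (tedge k₁ k₂ j)) i else 0) = sVal k₁ k₂ r (η k₁ k₂ j) i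
      rw [if_pos ⟨rfl, rfl, by decide⟩, ηS_tedge]
    · show joinL k₁ k₂ r (csd k₁ k₂ j) (tedge k₁ k₂ j) i 0
        = labC k₁ k₂ r (sVal k₁ k₂ r (η k₁ k₂ j) i)
      unfold joinL
      rw [ηS_tedge, if_pos (isCtr_csd k₁ k₂ j), if_pos rfl]
    · show joinL k₁ k₂ r (csd k₁ k₂ j) (tedge k₁ k₂ j) i 1
        = labB k₁ k₂ r (sVal k₁ k₂ r (η k₁ k₂ j) i)
      unfold joinL
      rw [ηS_tedge, if_pos (isCtr_csd k₁ k₂ j), if_neg (by decide)]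
    · show joinL k₁ k₂ r (lsd k₁ k₂ j) (tedge k₁ k₂ j) i 0
        = labA k₁ k₂ r (sVal k₁ k₂ r (η k₁ k₂ j) i)
      unfold joinL
      rw [ηS_tedge, if_neg (not_isCtr_lsd k₁ k₂ j), if_pos rfl]
    · show joinL k₁ k₂ r (lsd k₁ k₂ j) (tedge k₁ k₂ j) i 1
        = labD k₁ k₂ r (sVal k₁ k₂ r (η k₁ k₂ j) i)
      unfold joinL
      rw [ηS_tedge, if_neg (not_isCtr_lsd k₁ k₂ j), if_neg (by decide)]

end GraphAux


section BijAux

variable (k₁ k₂ r : ℕ)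

/-- classifier of which label family a value belongs to -/
def qcl (v : ℕ) : ℕ :=
  if v ≤ NN k₁ k₂ r then 0
  else if v ≤ 3 * NN k₁ k₂ r then (if (3 * NN k₁ k₂ r + 1 - v) % 2 = 0 then 1 else 4)
  else if v ≤ 4 * NN k₁ k₂ r then 3 else 2

lemma sVal_bounds (j : TI k₁ k₂) (i : Fin r) :
    1 ≤ sVal k₁ k₂ r (η k₁ k₂ j) i ∧ sVal k₁ k₂ r (η k₁ k₂ j) i ≤ NN k₁ k₂ r :=
  ⟨sVal_pos k₁ k₂ r _ _, sVal_le k₁ k₂ r (η_lt k₁ k₂ j) i.isLt⟩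

lemma qcl_lab (j : TI k₁ k₂) (i : Fin r) (q : Fin 5) :
    qcl k₁ k₂ r (lab k₁ k₂ r (Sum.inr (j, i, q))) = q.val := by
  obtain ⟨hs1, hs2⟩ := sVal_bounds k₁ k₂ r j i
  fin_cases q
  · replace hs1 : 1 ≤ sVal k₁ k₂ r (η k₁ k₂ j) i := hs1
    show qcl k₁ k₂ r (sVal k₁ k₂ r (η k₁ k₂ j) i) = 0
    unfold qcl; split_ifs <;> omega
  · show qcl k₁ k₂ r (labC k₁ k₂ r (sVal k₁ k₂ r (η k₁ k₂ j) i)) = 1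
    unfold qcl labC; split_ifs <;> omega
  · show qcl k₁ k₂ r (labB k₁ k₂ r (sVal k₁ k₂ r (η k₁ k₂ j) i)) = 2
    unfold qcl labB; split_ifs <;> omega
  · show qcl k₁ k₂ r (labA k₁ k₂ r (sVal k₁ k₂ r (η k₁ k₂ j) i)) = 3
    unfold qcl labA; split_ifs <;> omega
  · show qcl k₁ k₂ r (labD k₁ k₂ r (sVal k₁ k₂ r (η k₁ k₂ j) i)) = 4
    unfold qcl labD; split_ifs <;> omega

lemma lab_inr_le (j : TI k₁ k₂) (i : Fin r) (q : Fin 5) :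
    1 ≤ lab k₁ k₂ r (Sum.inr (j, i, q)) ∧
      lab k₁ k₂ r (Sum.inr (j, i, q)) ≤ 5 * NN k₁ k₂ r := by
  obtain ⟨hs1, hs2⟩ := sVal_bounds k₁ k₂ r j i
  fin_cases q
  · show 1 ≤ sVal k₁ k₂ r (η k₁ k₂ j) i ∧ sVal k₁ k₂ r (η k₁ k₂ j) i ≤ 5 * NN k₁ k₂ r
    omega
  · show 1 ≤ labC k₁ k₂ r _ ∧ labC k₁ k₂ r _ ≤ 5 * NN k₁ k₂ r
    unfold labC; omega
  · show 1 ≤ labB k₁ k₂ r _ ∧ labB k₁ k₂ r _ ≤ 5 * NN k₁ k₂ r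
    unfold labB; omega
  · show 1 ≤ labA k₁ k₂ r _ ∧ labA k₁ k₂ r _ ≤ 5 * NN k₁ k₂ r
    unfold labA; omega
  · show 1 ≤ labD k₁ k₂ r _ ∧ labD k₁ k₂ r _ ≤ 5 * NN k₁ k₂ r
    unfold labD; omega

lemma ptree_bounds (j : TI k₁ k₂) :
    5 * NN k₁ k₂ r + 1 ≤ lab k₁ k₂ r (Sum.inl j) ∧
      lab k₁ k₂ r (Sum.inl j) ≤ 5 * NN k₁ k₂ r + nn k₁ k₂ := by
  have h := η_lt k₁ k₂ j
  have hn := nn_def k₁ k₂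
  show 5 * NN k₁ k₂ r + 1 ≤ ptree k₁ k₂ r (η k₁ k₂ j) ∧
    ptree k₁ k₂ r (η k₁ k₂ j) ≤ 5 * NN k₁ k₂ r + nn k₁ k₂
  unfold ptree; split_ifs <;> omega

lemma lab_inj : Function.Injective (lab k₁ k₂ r) := by
  intro x y h
  rcases x with j | ⟨j, i, q⟩ <;> rcases y with j' | ⟨j', i', q'⟩
  · -- tree/tree
    have h1 := η_lt k₁ k₂ j
    have h2 := η_lt k₁ k₂ j'
    have : η k₁ k₂ j = η k₁ k₂ j' := by
      replace h : ptree k₁ k₂ r (η k₁ k₂ j) = ptree k₁ k₂ r (η k₁ k₂ j') := h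
      unfold ptree at h; split_ifs at h <;> omega
    rw [η_inj k₁ k₂ this]
  · exact absurd h (by have := ptree_bounds k₁ k₂ r j; have := lab_inr_le k₁ k₂ r j' i' q'; omega)
  · exact absurd h (by have := ptree_bounds k₁ k₂ r j'; have := lab_inr_le k₁ k₂ r j i q; omega)
  · -- both inr
    have hq : q = q' := by
      have h1 := qcl_lab k₁ k₂ r j i q
      have h2 := qcl_lab k₁ k₂ r j' i' q'
      rw [h] at h1; rw [h2] at h1
      exact Fin.ext h1.symm
    subst hq
    have hs : sVal k₁ k₂ r (η k₁ k₂ j) i = sVal k₁ k₂ r (η k₁ k₂ j') i' := by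
      obtain ⟨ha1, ha2⟩ := sVal_bounds k₁ k₂ r j i
      obtain ⟨hb1, hb2⟩ := sVal_bounds k₁ k₂ r j' i'
      fin_cases q
      · exact h
      · replace h : labC k₁ k₂ r (sVal k₁ k₂ r (η k₁ k₂ j) i)
          = labC k₁ k₂ r (sVal k₁ k₂ r (η k₁ k₂ j') i') := h
        unfold labC at h; omega
      · replace h : labB k₁ k₂ r (sVal k₁ k₂ r (η k₁ k₂ j) i)
          = labB k₁ k₂ r (sVal k₁ k₂ r (η k₁ k₂ j') i') := h
        unfold labB at h; omega
      · replace h : labA k₁ k₂ r (sVal k₁ k₂ r (η k₁ k₂ j) i)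
          = labA k₁ k₂ r (sVal k₁ k₂ r (η k₁ k₂ j') i') := h
        unfold labA at h; omega
      · replace h : labD k₁ k₂ r (sVal k₁ k₂ r (η k₁ k₂ j) i)
          = labD k₁ k₂ r (sVal k₁ k₂ r (η k₁ k₂ j') i') := h
        unfold labD at h; omega
    obtain ⟨he, hi⟩ := sVal_inj k₁ k₂ r (η_lt k₁ k₂ j) (η_lt k₁ k₂ j') hs
    rw [η_inj k₁ k₂ he, show i = i' from Fin.ext hi]

lemma ι_inj : Function.Injective (ι k₁ k₂ r) := by
  intro a b h
  exact lab_inj k₁ k₂ r (by rw [← ff_ι, ← ff_ι, h])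

lemma card_Idx : Fintype.card (Idx k₁ k₂ r) = 5 * NN k₁ k₂ r + nn k₁ k₂ := by
  have h : Fintype.card (Idx k₁ k₂ r)
      = (1 + (k₁ + k₂)) + (1 + (k₁ + k₂)) * (r * 5) := by
    simp [Fintype.card_sum, Fintype.card_prod, Fintype.card_fin]
  rw [h, show NN k₁ k₂ r = (k₁ + k₂ + 1) * r from rfl, show nn k₁ k₂ = k₁ + k₂ + 1 from rfl]
  ring

lemma lab_image :
    Finset.univ.image (lab k₁ k₂ r) = Finset.Icc 1 (5 * NN k₁ k₂ r + nn k₁ k₂) := by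
  apply Finset.eq_of_subset_of_card_le
  · intro v hv
    obtain ⟨idx, -, rfl⟩ := Finset.mem_image.mp hv
    rw [Finset.mem_Icc]
    rcases idx with j | ⟨j, i, q⟩
    · have := ptree_bounds k₁ k₂ r j; omega
    · have := lab_inr_le k₁ k₂ r j i q; omega
  · rw [Finset.card_image_of_injective _ (lab_inj k₁ k₂ r), Finset.card_univ, card_Idx,
      Nat.card_Icc]
    omega

lemma edgeFinset_eq :
    (GG k₁ k₂ r).edgeFinset = Finset.univ.image (ι k₁ k₂ r) := by
  ext E
  rw [SimpleGraph.mem_edgeFinset, Finset.mem_image]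
  constructor
  · intro hE
    obtain ⟨idx, hidx⟩ := GG_repr k₁ k₂ r E hE
    exact ⟨idx, Finset.mem_univ _, hidx⟩
  · rintro ⟨idx, -, rfl⟩
    exact ι_mem k₁ k₂ r idx

lemma card_edges : (GG k₁ k₂ r).edgeFinset.card = 5 * NN k₁ k₂ r + nn k₁ k₂ := by
  rw [edgeFinset_eq, Finset.card_image_of_injective _ (ι_inj k₁ k₂ r), Finset.card_univ,
    card_Idx]

lemma ff_bijOn :
    Set.BijOn (ff k₁ k₂ r) (GG k₁ k₂ r).edgeSet
      (Set.Icc 1 ((GG k₁ k₂ r).edgeFinset.card)) := by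
  rw [card_edges]
  refine ⟨?_, ?_, ?_⟩
  · intro E hE
    obtain ⟨idx, rfl⟩ := GG_repr k₁ k₂ r E hE
    rw [ff_ι]
    have : lab k₁ k₂ r idx ∈ Finset.Icc 1 (5 * NN k₁ k₂ r + nn k₁ k₂) := by
      rw [← lab_image]
      exact Finset.mem_image_of_mem _ (Finset.mem_univ _)
    rw [Finset.mem_Icc] at this
    exact Set.mem_Icc.mpr this
  · intro E1 h1 E2 h2 h
    obtain ⟨idx1, rfl⟩ := GG_repr k₁ k₂ r E1 h1
    obtain ⟨idx2, rfl⟩ := GG_repr k₁ k₂ r E2 h2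
    rw [ff_ι, ff_ι] at h
    rw [lab_inj k₁ k₂ r h]
  · intro v hv
    rw [Set.mem_Icc] at hv
    have : v ∈ Finset.univ.image (lab k₁ k₂ r) := by
      rw [lab_image, Finset.mem_Icc]; exact hv
    obtain ⟨idx, -, rfl⟩ := Finset.mem_image.mp this
    exact ⟨ι k₁ k₂ r idx, ι_mem k₁ k₂ r idx, ff_ι k₁ k₂ r idx⟩

end BijAux


section WeightAux

variable (k₁ k₂ r : ℕ)

lemma mem_ι_inl (u : VV k₁ k₂ r) (j : TI k₁ k₂) :
    u ∈ ι k₁ k₂ r (Sum.inl j) ↔ u = uCv k₁ k₂ r j ∨ u = uLv k₁ k₂ r j := Sym2.mem_iff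

lemma mem_ι_q0 (u : VV k₁ k₂ r) (j : TI k₁ k₂) (i : Fin r) :
    u ∈ ι k₁ k₂ r (Sum.inr (j, i, 0)) ↔ u = w0v k₁ k₂ r j i ∨ u = w1v k₁ k₂ r j i :=
  Sym2.mem_iff

lemma mem_ι_q1 (u : VV k₁ k₂ r) (j : TI k₁ k₂) (i : Fin r) :
    u ∈ ι k₁ k₂ r (Sum.inr (j, i, 1)) ↔ u = uCv k₁ k₂ r j ∨ u = w0v k₁ k₂ r j i :=
  Sym2.mem_iff

lemma mem_ι_q2 (u : VV k₁ k₂ r) (j : TI k₁ k₂) (i : Fin r) :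
    u ∈ ι k₁ k₂ r (Sum.inr (j, i, 2)) ↔ u = uCv k₁ k₂ r j ∨ u = w1v k₁ k₂ r j i :=
  Sym2.mem_iff

lemma mem_ι_q3 (u : VV k₁ k₂ r) (j : TI k₁ k₂) (i : Fin r) :
    u ∈ ι k₁ k₂ r (Sum.inr (j, i, 3)) ↔ u = uLv k₁ k₂ r j ∨ u = w0v k₁ k₂ r j i :=
  Sym2.mem_iff

lemma mem_ι_q4 (u : VV k₁ k₂ r) (j : TI k₁ k₂) (i : Fin r) :
    u ∈ ι k₁ k₂ r (Sum.inr (j, i, 4)) ↔ u = uLv k₁ k₂ r j ∨ u = w1v k₁ k₂ r j i :=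
  Sym2.mem_iff

lemma lab_q0 (j : TI k₁ k₂) (i : Fin r) :
    lab k₁ k₂ r (Sum.inr (j, i, 0)) = sVal k₁ k₂ r (η k₁ k₂ j) i := rfl
lemma lab_q1 (j : TI k₁ k₂) (i : Fin r) :
    lab k₁ k₂ r (Sum.inr (j, i, 1)) = labC k₁ k₂ r (sVal k₁ k₂ r (η k₁ k₂ j) i) := rfl
lemma lab_q2 (j : TI k₁ k₂) (i : Fin r) :
    lab k₁ k₂ r (Sum.inr (j, i, 2)) = labB k₁ k₂ r (sVal k₁ k₂ r (η k₁ k₂ j) i) := rfl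
lemma lab_q3 (j : TI k₁ k₂) (i : Fin r) :
    lab k₁ k₂ r (Sum.inr (j, i, 3)) = labA k₁ k₂ r (sVal k₁ k₂ r (η k₁ k₂ j) i) := rfl
lemma lab_q4 (j : TI k₁ k₂) (i : Fin r) :
    lab k₁ k₂ r (Sum.inr (j, i, 4)) = labD k₁ k₂ r (sVal k₁ k₂ r (η k₁ k₂ j) i) := rfl

lemma sum_point1 {α : Type*} [Fintype α] [DecidableEq α] (a₀ : α) (g : α → ℕ) :
    (∑ a : α, if a₀ = a then g a else 0) = g a₀ := by
  simp [Finset.sum_ite_eq]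

lemma sum_point2 {α β : Type*} [Fintype α] [Fintype β] [DecidableEq α] [DecidableEq β]
    (a₀ : α) (b₀ : β) (g : α → β → ℕ) :
    (∑ a : α, ∑ b : β, if a₀ = a ∧ b₀ = b then g a b else 0) = g a₀ b₀ := by
  have h1 : ∀ a : α, (∑ b : β, if a₀ = a ∧ b₀ = b then g a b else 0)
      = if a₀ = a then g a b₀ else 0 := by
    intro a
    by_cases ha : a₀ = a
    · subst ha
      rw [if_pos rfl]
      have h2 : ∀ b : β, (if a₀ = a₀ ∧ b₀ = b then g a₀ b else 0)
          = if b₀ = b then g a₀ b else 0 := by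
        intro b; by_cases hb : b₀ = b <;> simp [hb]
      rw [Finset.sum_congr rfl (fun b _ => h2 b)]
      exact sum_point1 b₀ (g a₀)
    · have h2 : ∀ b : β, (if a₀ = a ∧ b₀ = b then g a b else 0) = 0 := by
        intro b; rw [if_neg (fun h => ha h.1)]
      rw [Finset.sum_congr rfl (fun b _ => h2 b), Finset.sum_const_zero, if_neg ha]
  rw [Finset.sum_congr rfl (fun a _ => h1 a)]
  exact sum_point1 a₀ (fun a => g a b₀)

lemma weight_split (u : VV k₁ k₂ r) :
    weight (GG k₁ k₂ r) (ff k₁ k₂ r) u =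
      (∑ j : TI k₁ k₂, if u ∈ ι k₁ k₂ r (Sum.inl j) then lab k₁ k₂ r (Sum.inl j) else 0)
      + ∑ j : TI k₁ k₂, ∑ i : Fin r,
        ((if u ∈ ι k₁ k₂ r (Sum.inr (j, i, 0)) then lab k₁ k₂ r (Sum.inr (j, i, 0)) else 0)
          + (if u ∈ ι k₁ k₂ r (Sum.inr (j, i, 1)) then lab k₁ k₂ r (Sum.inr (j, i, 1)) else 0)
          + (if u ∈ ι k₁ k₂ r (Sum.inr (j, i, 2)) then lab k₁ k₂ r (Sum.inr (j, i, 2)) else 0)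
          + (if u ∈ ι k₁ k₂ r (Sum.inr (j, i, 3)) then lab k₁ k₂ r (Sum.inr (j, i, 3)) else 0)
          + (if u ∈ ι k₁ k₂ r (Sum.inr (j, i, 4)) then lab k₁ k₂ r (Sum.inr (j, i, 4)) else 0)) := by
  rw [weight, edgeFinset_eq,
    Finset.sum_image (fun x _ y _ h => ι_inj k₁ k₂ r h)]
  simp only [ff_ι, Fintype.sum_sum_type, Fintype.sum_prod_type, Fin.sum_univ_five]

def CSs (e : ℕ) : ℕ :=
  ∑ i : Fin r, (labC k₁ k₂ r (sVal k₁ k₂ r e i) + labB k₁ k₂ r (sVal k₁ k₂ r e i))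

def LSs (e : ℕ) : ℕ :=
  ∑ i : Fin r, (labA k₁ k₂ r (sVal k₁ k₂ r e i) + labD k₁ k₂ r (sVal k₁ k₂ r e i))

lemma weight_w0 (j₀ : TI k₁ k₂) (i₀ : Fin r) :
    weight (GG k₁ k₂ r) (ff k₁ k₂ r) (w0v k₁ k₂ r j₀ i₀) = 6 * NN k₁ k₂ r + 1 := by
  rw [weight_split]
  have h1 : (∑ j : TI k₁ k₂, if w0v k₁ k₂ r j₀ i₀ ∈ ι k₁ k₂ r (Sum.inl j)
      then lab k₁ k₂ r (Sum.inl j) else 0) = 0 := by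
    refine Finset.sum_eq_zero (fun j _ => ?_)
    rw [if_neg]
    rw [mem_ι_inl]
    rintro (h | h) <;> simp [w0v, uCv, uLv] at h
  rw [h1]
  have hbody : ∀ (j : TI k₁ k₂) (i : Fin r),
      ((if w0v k₁ k₂ r j₀ i₀ ∈ ι k₁ k₂ r (Sum.inr (j, i, 0)) then lab k₁ k₂ r (Sum.inr (j, i, 0)) else 0)
        + (if w0v k₁ k₂ r j₀ i₀ ∈ ι k₁ k₂ r (Sum.inr (j, i, 1)) then lab k₁ k₂ r (Sum.inr (j, i, 1)) else 0)
        + (if w0v k₁ k₂ r j₀ i₀ ∈ ι k₁ k₂ r (Sum.inr (j, i, 2)) then lab k₁ k₂ r (Sum.inr (j, i, 2)) else 0)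
        + (if w0v k₁ k₂ r j₀ i₀ ∈ ι k₁ k₂ r (Sum.inr (j, i, 3)) then lab k₁ k₂ r (Sum.inr (j, i, 3)) else 0)
        + (if w0v k₁ k₂ r j₀ i₀ ∈ ι k₁ k₂ r (Sum.inr (j, i, 4)) then lab k₁ k₂ r (Sum.inr (j, i, 4)) else 0))
      = if j₀ = j ∧ i₀ = i then 6 * NN k₁ k₂ r + 1 else 0 := by
    intro j i
    simp only [mem_ι_q0, mem_ι_q1, mem_ι_q2, mem_ι_q3, mem_ι_q4,
      lab_q0, lab_q1, lab_q2, lab_q3, lab_q4]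
    by_cases hji : j₀ = j ∧ i₀ = i
    · obtain ⟨rfl, rfl⟩ := hji
      have d2 : ¬(w0v k₁ k₂ r j₀ i₀ = uCv k₁ k₂ r j₀ ∨ w0v k₁ k₂ r j₀ i₀ = w1v k₁ k₂ r j₀ i₀) := by
        rintro (h | h)
        · simp [w0v, uCv] at h
        · simp [w0v, w1v, Prod.ext_iff] at h
      have d4 : ¬(w0v k₁ k₂ r j₀ i₀ = uLv k₁ k₂ r j₀ ∨ w0v k₁ k₂ r j₀ i₀ = w1v k₁ k₂ r j₀ i₀) := by
        rintro (h | h)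
        · simp [w0v, uLv] at h
        · simp [w0v, w1v, Prod.ext_iff] at h
      rw [if_pos (Or.inl rfl), if_pos (Or.inr rfl), if_neg d2, if_pos (Or.inr rfl),
        if_neg d4, if_pos ⟨rfl, rfl⟩]
      obtain ⟨hs1, hs2⟩ := sVal_bounds k₁ k₂ r j₀ i₀
      unfold labC labA; omega
    · rw [if_neg hji]
      have c0 : ¬(w0v k₁ k₂ r j₀ i₀ = w0v k₁ k₂ r j i ∨ w0v k₁ k₂ r j₀ i₀ = w1v k₁ k₂ r j i) := by
        rintro (h | h)
        · simp only [w0v, Sum.inr.injEq, Prod.mk.injEq, te_eq_iff] at h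
          exact hji ⟨h.1, h.2.1⟩
        · simp [w0v, w1v, Prod.ext_iff] at h
      have c1 : ¬(w0v k₁ k₂ r j₀ i₀ = uCv k₁ k₂ r j ∨ w0v k₁ k₂ r j₀ i₀ = w0v k₁ k₂ r j i) := by
        rintro (h | h)
        · simp [w0v, uCv] at h
        · simp only [w0v, Sum.inr.injEq, Prod.mk.injEq, te_eq_iff] at h
          exact hji ⟨h.1, h.2.1⟩
      have c2 : ¬(w0v k₁ k₂ r j₀ i₀ = uCv k₁ k₂ r j ∨ w0v k₁ k₂ r j₀ i₀ = w1v k₁ k₂ r j i) := by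
        rintro (h | h)
        · simp [w0v, uCv] at h
        · simp [w0v, w1v, Prod.ext_iff] at h
      have c3 : ¬(w0v k₁ k₂ r j₀ i₀ = uLv k₁ k₂ r j ∨ w0v k₁ k₂ r j₀ i₀ = w0v k₁ k₂ r j i) := by
        rintro (h | h)
        · simp [w0v, uLv] at h
        · simp only [w0v, Sum.inr.injEq, Prod.mk.injEq, te_eq_iff] at h
          exact hji ⟨h.1, h.2.1⟩
      have c4 : ¬(w0v k₁ k₂ r j₀ i₀ = uLv k₁ k₂ r j ∨ w0v k₁ k₂ r j₀ i₀ = w1v k₁ k₂ r j i) := by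
        rintro (h | h)
        · simp [w0v, uLv] at h
        · simp [w0v, w1v, Prod.ext_iff] at h
      rw [if_neg c0, if_neg c1, if_neg c2, if_neg c3, if_neg c4]
  rw [Finset.sum_congr rfl (fun j _ => Finset.sum_congr rfl (fun i _ => hbody j i)),
    sum_point2 j₀ i₀ (fun _ _ => 6 * NN k₁ k₂ r + 1)]
  omega

lemma weight_w1 (j₀ : TI k₁ k₂) (i₀ : Fin r) :
    weight (GG k₁ k₂ r) (ff k₁ k₂ r) (w1v k₁ k₂ r j₀ i₀) = 7 * NN k₁ k₂ r + 2 := by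
  rw [weight_split]
  have h1 : (∑ j : TI k₁ k₂, if w1v k₁ k₂ r j₀ i₀ ∈ ι k₁ k₂ r (Sum.inl j)
      then lab k₁ k₂ r (Sum.inl j) else 0) = 0 := by
    refine Finset.sum_eq_zero (fun j _ => ?_)
    rw [if_neg]
    rw [mem_ι_inl]
    rintro (h | h) <;> simp [w1v, uCv, uLv] at h
  rw [h1]
  have hbody : ∀ (j : TI k₁ k₂) (i : Fin r),
      ((if w1v k₁ k₂ r j₀ i₀ ∈ ι k₁ k₂ r (Sum.inr (j, i, 0)) then lab k₁ k₂ r (Sum.inr (j, i, 0)) else 0)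
        + (if w1v k₁ k₂ r j₀ i₀ ∈ ι k₁ k₂ r (Sum.inr (j, i, 1)) then lab k₁ k₂ r (Sum.inr (j, i, 1)) else 0)
        + (if w1v k₁ k₂ r j₀ i₀ ∈ ι k₁ k₂ r (Sum.inr (j, i, 2)) then lab k₁ k₂ r (Sum.inr (j, i, 2)) else 0)
        + (if w1v k₁ k₂ r j₀ i₀ ∈ ι k₁ k₂ r (Sum.inr (j, i, 3)) then lab k₁ k₂ r (Sum.inr (j, i, 3)) else 0)
        + (if w1v k₁ k₂ r j₀ i₀ ∈ ι k₁ k₂ r (Sum.inr (j, i, 4)) then lab k₁ k₂ r (Sum.inr (j, i, 4)) else 0))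
      = if j₀ = j ∧ i₀ = i then 7 * NN k₁ k₂ r + 2 else 0 := by
    intro j i
    simp only [mem_ι_q0, mem_ι_q1, mem_ι_q2, mem_ι_q3, mem_ι_q4,
      lab_q0, lab_q1, lab_q2, lab_q3, lab_q4]
    by_cases hji : j₀ = j ∧ i₀ = i
    · obtain ⟨rfl, rfl⟩ := hji
      have d1 : ¬(w1v k₁ k₂ r j₀ i₀ = uCv k₁ k₂ r j₀ ∨ w1v k₁ k₂ r j₀ i₀ = w0v k₁ k₂ r j₀ i₀) := by
        rintro (h | h)
        · simp [w1v, uCv] at h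
        · simp [w1v, w0v, Prod.ext_iff] at h
      have d3 : ¬(w1v k₁ k₂ r j₀ i₀ = uLv k₁ k₂ r j₀ ∨ w1v k₁ k₂ r j₀ i₀ = w0v k₁ k₂ r j₀ i₀) := by
        rintro (h | h)
        · simp [w1v, uLv] at h
        · simp [w1v, w0v, Prod.ext_iff] at h
      rw [if_pos (Or.inr rfl), if_neg d1, if_pos (Or.inr rfl), if_neg d3,
        if_pos (Or.inr rfl), if_pos ⟨rfl, rfl⟩]
      obtain ⟨hs1, hs2⟩ := sVal_bounds k₁ k₂ r j₀ i₀
      unfold labB labD; omega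
    · rw [if_neg hji]
      have c0 : ¬(w1v k₁ k₂ r j₀ i₀ = w0v k₁ k₂ r j i ∨ w1v k₁ k₂ r j₀ i₀ = w1v k₁ k₂ r j i) := by
        rintro (h | h)
        · simp [w1v, w0v, Prod.ext_iff] at h
        · simp only [w1v, Sum.inr.injEq, Prod.mk.injEq, te_eq_iff] at h
          exact hji ⟨h.1, h.2.1⟩
      have c1 : ¬(w1v k₁ k₂ r j₀ i₀ = uCv k₁ k₂ r j ∨ w1v k₁ k₂ r j₀ i₀ = w0v k₁ k₂ r j i) := by
        rintro (h | h)
        · simp [w1v, uCv] at h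
        · simp [w1v, w0v, Prod.ext_iff] at h
      have c2 : ¬(w1v k₁ k₂ r j₀ i₀ = uCv k₁ k₂ r j ∨ w1v k₁ k₂ r j₀ i₀ = w1v k₁ k₂ r j i) := by
        rintro (h | h)
        · simp [w1v, uCv] at h
        · simp only [w1v, Sum.inr.injEq, Prod.mk.injEq, te_eq_iff] at h
          exact hji ⟨h.1, h.2.1⟩
      have c3 : ¬(w1v k₁ k₂ r j₀ i₀ = uLv k₁ k₂ r j ∨ w1v k₁ k₂ r j₀ i₀ = w0v k₁ k₂ r j i) := by
        rintro (h | h)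
        · simp [w1v, uLv] at h
        · simp [w1v, w0v, Prod.ext_iff] at h
      have c4 : ¬(w1v k₁ k₂ r j₀ i₀ = uLv k₁ k₂ r j ∨ w1v k₁ k₂ r j₀ i₀ = w1v k₁ k₂ r j i) := by
        rintro (h | h)
        · simp [w1v, uLv] at h
        · simp only [w1v, Sum.inr.injEq, Prod.mk.injEq, te_eq_iff] at h
          exact hji ⟨h.1, h.2.1⟩
      rw [if_neg c0, if_neg c1, if_neg c2, if_neg c3, if_neg c4]
  rw [Finset.sum_congr rfl (fun j _ => Finset.sum_congr rfl (fun i _ => hbody j i)),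
    sum_point2 j₀ i₀ (fun _ _ => 7 * NN k₁ k₂ r + 2)]
  omega

lemma leaf_ne_uCv (l : Fin k₁ ⊕ Fin k₂) (j : TI k₁ k₂) :
    ¬ ((Sum.inl (Sum.inr l) : VV k₁ k₂ r) = uCv k₁ k₂ r j) := by
  intro h
  rcases j with _ | (x | y) <;> simp [uCv, csd, c1, c2] at h

lemma leaf_eq_uLv (l : Fin k₁ ⊕ Fin k₂) (j : TI k₁ k₂) :
    ((Sum.inl (Sum.inr l) : VV k₁ k₂ r) = uLv k₁ k₂ r j)
      ↔ (Sum.inr l : TI k₁ k₂) = j := by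
  rcases j with _ | l' <;> simp [uLv, lsd, c2]

lemma weight_leaf (l : Fin k₁ ⊕ Fin k₂) :
    weight (GG k₁ k₂ r) (ff k₁ k₂ r) (Sum.inl (Sum.inr l)) =
      ptree k₁ k₂ r (η k₁ k₂ (Sum.inr l)) + LSs k₁ k₂ r (η k₁ k₂ (Sum.inr l)) := by
  rw [weight_split]
  have h1 : ∀ j : TI k₁ k₂,
      (if (Sum.inl (Sum.inr l) : VV k₁ k₂ r) ∈ ι k₁ k₂ r (Sum.inl j)
        then lab k₁ k₂ r (Sum.inl j) else 0)
      = if (Sum.inr l : TI k₁ k₂) = j then ptree k₁ k₂ r (η k₁ k₂ j) else 0 := by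
    intro j
    by_cases hj : (Sum.inr l : TI k₁ k₂) = j
    · rw [if_pos ((mem_ι_inl k₁ k₂ r _ j).mpr (Or.inr ((leaf_eq_uLv k₁ k₂ r l j).mpr hj))),
        if_pos hj]
      rfl
    · rw [if_neg (fun hm => ?_), if_neg hj]
      rcases (mem_ι_inl k₁ k₂ r _ j).mp hm with h | h
      · exact leaf_ne_uCv k₁ k₂ r l j h
      · exact hj ((leaf_eq_uLv k₁ k₂ r l j).mp h)
  have hbody : ∀ (j : TI k₁ k₂) (i : Fin r),
      ((if (Sum.inl (Sum.inr l) : VV k₁ k₂ r) ∈ ι k₁ k₂ r (Sum.inr (j, i, 0)) then lab k₁ k₂ r (Sum.inr (j, i, 0)) else 0)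
        + (if (Sum.inl (Sum.inr l) : VV k₁ k₂ r) ∈ ι k₁ k₂ r (Sum.inr (j, i, 1)) then lab k₁ k₂ r (Sum.inr (j, i, 1)) else 0)
        + (if (Sum.inl (Sum.inr l) : VV k₁ k₂ r) ∈ ι k₁ k₂ r (Sum.inr (j, i, 2)) then lab k₁ k₂ r (Sum.inr (j, i, 2)) else 0)
        + (if (Sum.inl (Sum.inr l) : VV k₁ k₂ r) ∈ ι k₁ k₂ r (Sum.inr (j, i, 3)) then lab k₁ k₂ r (Sum.inr (j, i, 3)) else 0)
        + (if (Sum.inl (Sum.inr l) : VV k₁ k₂ r) ∈ ι k₁ k₂ r (Sum.inr (j, i, 4)) then lab k₁ k₂ r (Sum.inr (j, i, 4)) else 0))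
      = if (Sum.inr l : TI k₁ k₂) = j then
          (labA k₁ k₂ r (sVal k₁ k₂ r (η k₁ k₂ j) i) + labD k₁ k₂ r (sVal k₁ k₂ r (η k₁ k₂ j) i))
        else 0 := by
    intro j i
    simp only [mem_ι_q0, mem_ι_q1, mem_ι_q2, mem_ι_q3, mem_ι_q4,
      lab_q0, lab_q1, lab_q2, lab_q3, lab_q4]
    have c0 : ¬((Sum.inl (Sum.inr l) : VV k₁ k₂ r) = w0v k₁ k₂ r j i
        ∨ (Sum.inl (Sum.inr l) : VV k₁ k₂ r) = w1v k₁ k₂ r j i) := by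
      rintro (h | h) <;> simp [w0v, w1v] at h
    have c1 : ¬((Sum.inl (Sum.inr l) : VV k₁ k₂ r) = uCv k₁ k₂ r j
        ∨ (Sum.inl (Sum.inr l) : VV k₁ k₂ r) = w0v k₁ k₂ r j i) := by
      rintro (h | h)
      · exact leaf_ne_uCv k₁ k₂ r l j h
      · simp [w0v] at h
    have c2 : ¬((Sum.inl (Sum.inr l) : VV k₁ k₂ r) = uCv k₁ k₂ r j
        ∨ (Sum.inl (Sum.inr l) : VV k₁ k₂ r) = w1v k₁ k₂ r j i) := by
      rintro (h | h)
      · exact leaf_ne_uCv k₁ k₂ r l j h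
      · simp [w1v] at h
    rw [if_neg c0, if_neg c1, if_neg c2]
    by_cases hj : (Sum.inr l : TI k₁ k₂) = j
    · rw [if_pos (Or.inl ((leaf_eq_uLv k₁ k₂ r l j).mpr hj)),
        if_pos (Or.inl ((leaf_eq_uLv k₁ k₂ r l j).mpr hj)), if_pos hj]
      omega
    · have c3 : ¬((Sum.inl (Sum.inr l) : VV k₁ k₂ r) = uLv k₁ k₂ r j
          ∨ (Sum.inl (Sum.inr l) : VV k₁ k₂ r) = w0v k₁ k₂ r j i) := by
        rintro (h | h)
        · exact hj ((leaf_eq_uLv k₁ k₂ r l j).mp h)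
        · simp [w0v] at h
      have c4 : ¬((Sum.inl (Sum.inr l) : VV k₁ k₂ r) = uLv k₁ k₂ r j
          ∨ (Sum.inl (Sum.inr l) : VV k₁ k₂ r) = w1v k₁ k₂ r j i) := by
        rintro (h | h)
        · exact hj ((leaf_eq_uLv k₁ k₂ r l j).mp h)
        · simp [w1v] at h
      rw [if_neg c3, if_neg c4, if_neg hj]
  rw [Finset.sum_congr rfl (fun j _ => h1 j), sum_point1,
    Finset.sum_congr rfl (fun j _ => Finset.sum_congr rfl (fun i _ => hbody j i))]
  have h2 : ∀ j : TI k₁ k₂,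
      (∑ i : Fin r, if (Sum.inr l : TI k₁ k₂) = j then
          (labA k₁ k₂ r (sVal k₁ k₂ r (η k₁ k₂ j) i) + labD k₁ k₂ r (sVal k₁ k₂ r (η k₁ k₂ j) i))
        else 0)
      = if (Sum.inr l : TI k₁ k₂) = j then LSs k₁ k₂ r (η k₁ k₂ j) else 0 := by
    intro j
    by_cases hj : (Sum.inr l : TI k₁ k₂) = j <;> simp [hj, LSs]
  rw [Finset.sum_congr rfl (fun j _ => h2 j), sum_point1]

lemma TI_sum (f : TI k₁ k₂ → ℕ) :
    ∑ j : TI k₁ k₂, f j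
      = f (Sum.inl ()) + ((∑ x : Fin k₁, f (Sum.inr (Sum.inl x)))
          + ∑ y : Fin k₂, f (Sum.inr (Sum.inr y))) := by
  simp only [Fintype.sum_sum_type, Finset.univ_unique, Finset.sum_singleton]

lemma weight_c1 :
    weight (GG k₁ k₂ r) (ff k₁ k₂ r) (Sum.inl (c1 k₁ k₂)) =
      (ptree k₁ k₂ r 0 + CSs k₁ k₂ r 0)
        + ∑ x : Fin k₁, (ptree k₁ k₂ r ((x : ℕ) + 1) + CSs k₁ k₂ r ((x : ℕ) + 1)) := by
  rw [weight_split, TI_sum, TI_sum]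
  have e0 : (if (Sum.inl (c1 k₁ k₂) : VV k₁ k₂ r) ∈ ι k₁ k₂ r (Sum.inl (Sum.inl ()))
      then lab k₁ k₂ r (Sum.inl (Sum.inl ())) else 0) = ptree k₁ k₂ r 0 := by
    rw [if_pos ((mem_ι_inl k₁ k₂ r _ _).mpr (Or.inl (by rfl)))]; rfl
  have e1 : ∀ x : Fin k₁,
      (if (Sum.inl (c1 k₁ k₂) : VV k₁ k₂ r) ∈ ι k₁ k₂ r (Sum.inl (Sum.inr (Sum.inl x)))
        then lab k₁ k₂ r (Sum.inl (Sum.inr (Sum.inl x))) else 0) = ptree k₁ k₂ r ((x : ℕ) + 1) := by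
    intro x
    rw [if_pos ((mem_ι_inl k₁ k₂ r _ _).mpr (Or.inl (by rfl)))]; rfl
  have e2 : ∀ y : Fin k₂,
      (if (Sum.inl (c1 k₁ k₂) : VV k₁ k₂ r) ∈ ι k₁ k₂ r (Sum.inl (Sum.inr (Sum.inr y)))
        then lab k₁ k₂ r (Sum.inl (Sum.inr (Sum.inr y))) else 0) = 0 := by
    intro y
    rw [if_neg (fun hm => ?_)]
    rcases (mem_ι_inl k₁ k₂ r _ _).mp hm with h | h <;>
      simp [uCv, uLv, csd, lsd, c1, c2] at h
  have hCpos : ∀ (j : TI k₁ k₂), csd k₁ k₂ j = c1 k₁ k₂ → ∀ i : Fin r,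
      ((if (Sum.inl (c1 k₁ k₂) : VV k₁ k₂ r) ∈ ι k₁ k₂ r (Sum.inr (j, i, 0)) then lab k₁ k₂ r (Sum.inr (j, i, 0)) else 0)
        + (if (Sum.inl (c1 k₁ k₂) : VV k₁ k₂ r) ∈ ι k₁ k₂ r (Sum.inr (j, i, 1)) then lab k₁ k₂ r (Sum.inr (j, i, 1)) else 0)
        + (if (Sum.inl (c1 k₁ k₂) : VV k₁ k₂ r) ∈ ι k₁ k₂ r (Sum.inr (j, i, 2)) then lab k₁ k₂ r (Sum.inr (j, i, 2)) else 0)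
        + (if (Sum.inl (c1 k₁ k₂) : VV k₁ k₂ r) ∈ ι k₁ k₂ r (Sum.inr (j, i, 3)) then lab k₁ k₂ r (Sum.inr (j, i, 3)) else 0)
        + (if (Sum.inl (c1 k₁ k₂) : VV k₁ k₂ r) ∈ ι k₁ k₂ r (Sum.inr (j, i, 4)) then lab k₁ k₂ r (Sum.inr (j, i, 4)) else 0))
      = labC k₁ k₂ r (sVal k₁ k₂ r (η k₁ k₂ j) i) + labB k₁ k₂ r (sVal k₁ k₂ r (η k₁ k₂ j) i) := by
    intro j hcs i
    have hC : (Sum.inl (c1 k₁ k₂) : VV k₁ k₂ r) = uCv k₁ k₂ r j := by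
      simp [uCv, hcs]
    have hL : ¬ ((Sum.inl (c1 k₁ k₂) : VV k₁ k₂ r) = uLv k₁ k₂ r j) := by
      intro h
      rcases j with _ | (x | y) <;> simp [uLv, lsd, c1, c2] at h
    simp only [mem_ι_q0, mem_ι_q1, mem_ι_q2, mem_ι_q3, mem_ι_q4,
      lab_q0, lab_q1, lab_q2, lab_q3, lab_q4]
    have c0 : ¬((Sum.inl (c1 k₁ k₂) : VV k₁ k₂ r) = w0v k₁ k₂ r j i
        ∨ (Sum.inl (c1 k₁ k₂) : VV k₁ k₂ r) = w1v k₁ k₂ r j i) := by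
      rintro (h | h) <;> simp [w0v, w1v] at h
    have c3 : ¬((Sum.inl (c1 k₁ k₂) : VV k₁ k₂ r) = uLv k₁ k₂ r j
        ∨ (Sum.inl (c1 k₁ k₂) : VV k₁ k₂ r) = w0v k₁ k₂ r j i) := by
      rintro (h | h)
      · exact hL h
      · simp [w0v] at h
    have c4 : ¬((Sum.inl (c1 k₁ k₂) : VV k₁ k₂ r) = uLv k₁ k₂ r j
        ∨ (Sum.inl (c1 k₁ k₂) : VV k₁ k₂ r) = w1v k₁ k₂ r j i) := by
      rintro (h | h)
      · exact hL h
      · simp [w1v] at h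
    rw [if_neg c0, if_pos (Or.inl hC), if_pos (Or.inl hC), if_neg c3, if_neg c4]
    omega
  have hCneg : ∀ (j : TI k₁ k₂), ¬ (csd k₁ k₂ j = c1 k₁ k₂) → ∀ i : Fin r,
      ((if (Sum.inl (c1 k₁ k₂) : VV k₁ k₂ r) ∈ ι k₁ k₂ r (Sum.inr (j, i, 0)) then lab k₁ k₂ r (Sum.inr (j, i, 0)) else 0)
        + (if (Sum.inl (c1 k₁ k₂) : VV k₁ k₂ r) ∈ ι k₁ k₂ r (Sum.inr (j, i, 1)) then lab k₁ k₂ r (Sum.inr (j, i, 1)) else 0)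
        + (if (Sum.inl (c1 k₁ k₂) : VV k₁ k₂ r) ∈ ι k₁ k₂ r (Sum.inr (j, i, 2)) then lab k₁ k₂ r (Sum.inr (j, i, 2)) else 0)
        + (if (Sum.inl (c1 k₁ k₂) : VV k₁ k₂ r) ∈ ι k₁ k₂ r (Sum.inr (j, i, 3)) then lab k₁ k₂ r (Sum.inr (j, i, 3)) else 0)
        + (if (Sum.inl (c1 k₁ k₂) : VV k₁ k₂ r) ∈ ι k₁ k₂ r (Sum.inr (j, i, 4)) then lab k₁ k₂ r (Sum.inr (j, i, 4)) else 0))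
      = 0 := by
    intro j hcs i
    have hC : ¬ ((Sum.inl (c1 k₁ k₂) : VV k₁ k₂ r) = uCv k₁ k₂ r j) := by
      intro h
      exact hcs (by simpa [uCv] using h.symm)
    have hL : ¬ ((Sum.inl (c1 k₁ k₂) : VV k₁ k₂ r) = uLv k₁ k₂ r j) := by
      intro h
      rcases j with _ | (x | y) <;> simp [uLv, lsd, c1, c2] at h
    simp only [mem_ι_q0, mem_ι_q1, mem_ι_q2, mem_ι_q3, mem_ι_q4,
      lab_q0, lab_q1, lab_q2, lab_q3, lab_q4]
    have c0 : ¬((Sum.inl (c1 k₁ k₂) : VV k₁ k₂ r) = w0v k₁ k₂ r j i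
        ∨ (Sum.inl (c1 k₁ k₂) : VV k₁ k₂ r) = w1v k₁ k₂ r j i) := by
      rintro (h | h) <;> simp [w0v, w1v] at h
    have c1' : ¬((Sum.inl (c1 k₁ k₂) : VV k₁ k₂ r) = uCv k₁ k₂ r j
        ∨ (Sum.inl (c1 k₁ k₂) : VV k₁ k₂ r) = w0v k₁ k₂ r j i) := by
      rintro (h | h)
      · exact hC h
      · simp [w0v] at h
    have c2' : ¬((Sum.inl (c1 k₁ k₂) : VV k₁ k₂ r) = uCv k₁ k₂ r j
        ∨ (Sum.inl (c1 k₁ k₂) : VV k₁ k₂ r) = w1v k₁ k₂ r j i) := by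
      rintro (h | h)
      · exact hC h
      · simp [w1v] at h
    have c3 : ¬((Sum.inl (c1 k₁ k₂) : VV k₁ k₂ r) = uLv k₁ k₂ r j
        ∨ (Sum.inl (c1 k₁ k₂) : VV k₁ k₂ r) = w0v k₁ k₂ r j i) := by
      rintro (h | h)
      · exact hL h
      · simp [w0v] at h
    have c4 : ¬((Sum.inl (c1 k₁ k₂) : VV k₁ k₂ r) = uLv k₁ k₂ r j
        ∨ (Sum.inl (c1 k₁ k₂) : VV k₁ k₂ r) = w1v k₁ k₂ r j i) := by
      rintro (h | h)
      · exact hL h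
      · simp [w1v] at h
    rw [if_neg c0, if_neg c1', if_neg c2', if_neg c3, if_neg c4]
  rw [e0, Finset.sum_congr rfl (fun x _ => e1 x), Finset.sum_congr rfl (fun y _ => e2 y),
    Finset.sum_congr rfl (fun i _ => hCpos (Sum.inl ()) rfl i),
    Finset.sum_congr rfl (fun x _ => Finset.sum_congr rfl (fun i _ => hCpos (Sum.inr (Sum.inl x)) rfl i)),
    Finset.sum_congr rfl (fun y _ => Finset.sum_congr rfl
      (fun i _ => hCneg (Sum.inr (Sum.inr y)) (by simp [csd, c1, c2]) i))]
  simp only [show η k₁ k₂ (Sum.inl () : TI k₁ k₂) = 0 from rfl,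
    show ∀ x : Fin k₁, η k₁ k₂ (Sum.inr (Sum.inl x) : TI k₁ k₂) = (x : ℕ) + 1 from fun _ => rfl]
  simp only [CSs, Finset.sum_const_zero, Finset.sum_add_distrib]
  omega

lemma weight_c2 :
    weight (GG k₁ k₂ r) (ff k₁ k₂ r) (Sum.inl (c2 k₁ k₂)) =
      (ptree k₁ k₂ r 0 + LSs k₁ k₂ r 0)
        + ∑ y : Fin k₂, (ptree k₁ k₂ r (k₁ + 1 + (y : ℕ)) + CSs k₁ k₂ r (k₁ + 1 + (y : ℕ))) := by
  rw [weight_split, TI_sum, TI_sum]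
  have e0 : (if (Sum.inl (c2 k₁ k₂) : VV k₁ k₂ r) ∈ ι k₁ k₂ r (Sum.inl (Sum.inl ()))
      then lab k₁ k₂ r (Sum.inl (Sum.inl ())) else 0) = ptree k₁ k₂ r 0 := by
    rw [if_pos ((mem_ι_inl k₁ k₂ r _ _).mpr (Or.inr (by rfl)))]; rfl
  have e1 : ∀ x : Fin k₁,
      (if (Sum.inl (c2 k₁ k₂) : VV k₁ k₂ r) ∈ ι k₁ k₂ r (Sum.inl (Sum.inr (Sum.inl x)))
        then lab k₁ k₂ r (Sum.inl (Sum.inr (Sum.inl x))) else 0) = 0 := by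
    intro x
    rw [if_neg (fun hm => ?_)]
    rcases (mem_ι_inl k₁ k₂ r _ _).mp hm with h | h <;>
      simp [uCv, uLv, csd, lsd, c1, c2] at h
  have e2 : ∀ y : Fin k₂,
      (if (Sum.inl (c2 k₁ k₂) : VV k₁ k₂ r) ∈ ι k₁ k₂ r (Sum.inl (Sum.inr (Sum.inr y)))
        then lab k₁ k₂ r (Sum.inl (Sum.inr (Sum.inr y))) else 0) = ptree k₁ k₂ r (k₁ + 1 + (y : ℕ)) := by
    intro y
    rw [if_pos ((mem_ι_inl k₁ k₂ r _ _).mpr (Or.inl (by rfl)))]; rfl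
  have hqC : ∀ (j : TI k₁ k₂), csd k₁ k₂ j = c2 k₁ k₂ → ∀ i : Fin r,
      ((if (Sum.inl (c2 k₁ k₂) : VV k₁ k₂ r) ∈ ι k₁ k₂ r (Sum.inr (j, i, 0)) then lab k₁ k₂ r (Sum.inr (j, i, 0)) else 0)
        + (if (Sum.inl (c2 k₁ k₂) : VV k₁ k₂ r) ∈ ι k₁ k₂ r (Sum.inr (j, i, 1)) then lab k₁ k₂ r (Sum.inr (j, i, 1)) else 0)
        + (if (Sum.inl (c2 k₁ k₂) : VV k₁ k₂ r) ∈ ι k₁ k₂ r (Sum.inr (j, i, 2)) then lab k₁ k₂ r (Sum.inr (j, i, 2)) else 0)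
        + (if (Sum.inl (c2 k₁ k₂) : VV k₁ k₂ r) ∈ ι k₁ k₂ r (Sum.inr (j, i, 3)) then lab k₁ k₂ r (Sum.inr (j, i, 3)) else 0)
        + (if (Sum.inl (c2 k₁ k₂) : VV k₁ k₂ r) ∈ ι k₁ k₂ r (Sum.inr (j, i, 4)) then lab k₁ k₂ r (Sum.inr (j, i, 4)) else 0))
      = labC k₁ k₂ r (sVal k₁ k₂ r (η k₁ k₂ j) i) + labB k₁ k₂ r (sVal k₁ k₂ r (η k₁ k₂ j) i) := by
    intro j hcs i
    have hC : (Sum.inl (c2 k₁ k₂) : VV k₁ k₂ r) = uCv k₁ k₂ r j := by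
      simp [uCv, hcs]
    have hL : ¬ ((Sum.inl (c2 k₁ k₂) : VV k₁ k₂ r) = uLv k₁ k₂ r j) := by
      intro h
      rcases j with _ | (x | y)
      · simp [csd, c1, c2] at hcs
      · simp [uLv, lsd, c1, c2] at h
      · simp [uLv, lsd, c1, c2] at h
    simp only [mem_ι_q0, mem_ι_q1, mem_ι_q2, mem_ι_q3, mem_ι_q4,
      lab_q0, lab_q1, lab_q2, lab_q3, lab_q4]
    have c0 : ¬((Sum.inl (c2 k₁ k₂) : VV k₁ k₂ r) = w0v k₁ k₂ r j i
        ∨ (Sum.inl (c2 k₁ k₂) : VV k₁ k₂ r) = w1v k₁ k₂ r j i) := by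
      rintro (h | h) <;> simp [w0v, w1v] at h
    have c3 : ¬((Sum.inl (c2 k₁ k₂) : VV k₁ k₂ r) = uLv k₁ k₂ r j
        ∨ (Sum.inl (c2 k₁ k₂) : VV k₁ k₂ r) = w0v k₁ k₂ r j i) := by
      rintro (h | h)
      · exact hL h
      · simp [w0v] at h
    have c4 : ¬((Sum.inl (c2 k₁ k₂) : VV k₁ k₂ r) = uLv k₁ k₂ r j
        ∨ (Sum.inl (c2 k₁ k₂) : VV k₁ k₂ r) = w1v k₁ k₂ r j i) := by
      rintro (h | h)
      · exact hL h
      · simp [w1v] at h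
    rw [if_neg c0, if_pos (Or.inl hC), if_pos (Or.inl hC), if_neg c3, if_neg c4]
    omega
  have hqL : ∀ i : Fin r,
      ((if (Sum.inl (c2 k₁ k₂) : VV k₁ k₂ r) ∈ ι k₁ k₂ r (Sum.inr ((Sum.inl () : TI k₁ k₂), i, 0)) then lab k₁ k₂ r (Sum.inr ((Sum.inl () : TI k₁ k₂), i, 0)) else 0)
        + (if (Sum.inl (c2 k₁ k₂) : VV k₁ k₂ r) ∈ ι k₁ k₂ r (Sum.inr ((Sum.inl () : TI k₁ k₂), i, 1)) then lab k₁ k₂ r (Sum.inr ((Sum.inl () : TI k₁ k₂), i, 1)) else 0)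
        + (if (Sum.inl (c2 k₁ k₂) : VV k₁ k₂ r) ∈ ι k₁ k₂ r (Sum.inr ((Sum.inl () : TI k₁ k₂), i, 2)) then lab k₁ k₂ r (Sum.inr ((Sum.inl () : TI k₁ k₂), i, 2)) else 0)
        + (if (Sum.inl (c2 k₁ k₂) : VV k₁ k₂ r) ∈ ι k₁ k₂ r (Sum.inr ((Sum.inl () : TI k₁ k₂), i, 3)) then lab k₁ k₂ r (Sum.inr ((Sum.inl () : TI k₁ k₂), i, 3)) else 0)
        + (if (Sum.inl (c2 k₁ k₂) : VV k₁ k₂ r) ∈ ι k₁ k₂ r (Sum.inr ((Sum.inl () : TI k₁ k₂), i, 4)) then lab k₁ k₂ r (Sum.inr ((Sum.inl () : TI k₁ k₂), i, 4)) else 0))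
      = labA k₁ k₂ r (sVal k₁ k₂ r (η k₁ k₂ (Sum.inl () : TI k₁ k₂)) i)
        + labD k₁ k₂ r (sVal k₁ k₂ r (η k₁ k₂ (Sum.inl () : TI k₁ k₂)) i) := by
    intro i
    have hL : (Sum.inl (c2 k₁ k₂) : VV k₁ k₂ r) = uLv k₁ k₂ r (Sum.inl ()) := rfl
    have hC : ¬ ((Sum.inl (c2 k₁ k₂) : VV k₁ k₂ r) = uCv k₁ k₂ r (Sum.inl ())) := by
      simp [uCv, csd, c1, c2]
    simp only [mem_ι_q0, mem_ι_q1, mem_ι_q2, mem_ι_q3, mem_ι_q4,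
      lab_q0, lab_q1, lab_q2, lab_q3, lab_q4]
    have c0 : ¬((Sum.inl (c2 k₁ k₂) : VV k₁ k₂ r) = w0v k₁ k₂ r (Sum.inl ()) i
        ∨ (Sum.inl (c2 k₁ k₂) : VV k₁ k₂ r) = w1v k₁ k₂ r (Sum.inl ()) i) := by
      rintro (h | h) <;> simp [w0v, w1v] at h
    have c1' : ¬((Sum.inl (c2 k₁ k₂) : VV k₁ k₂ r) = uCv k₁ k₂ r (Sum.inl ())
        ∨ (Sum.inl (c2 k₁ k₂) : VV k₁ k₂ r) = w0v k₁ k₂ r (Sum.inl ()) i) := by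
      rintro (h | h)
      · exact hC h
      · simp [w0v] at h
    have c2' : ¬((Sum.inl (c2 k₁ k₂) : VV k₁ k₂ r) = uCv k₁ k₂ r (Sum.inl ())
        ∨ (Sum.inl (c2 k₁ k₂) : VV k₁ k₂ r) = w1v k₁ k₂ r (Sum.inl ()) i) := by
      rintro (h | h)
      · exact hC h
      · simp [w1v] at h
    rw [if_neg c0, if_neg c1', if_neg c2', if_pos (Or.inl hL), if_pos (Or.inl hL)]
    omega
  have hqN : ∀ (x : Fin k₁) (i : Fin r),
      ((if (Sum.inl (c2 k₁ k₂) : VV k₁ k₂ r) ∈ ι k₁ k₂ r (Sum.inr ((Sum.inr (Sum.inl x) : TI k₁ k₂), i, 0)) then lab k₁ k₂ r (Sum.inr ((Sum.inr (Sum.inl x) : TI k₁ k₂), i, 0)) else 0)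
        + (if (Sum.inl (c2 k₁ k₂) : VV k₁ k₂ r) ∈ ι k₁ k₂ r (Sum.inr ((Sum.inr (Sum.inl x) : TI k₁ k₂), i, 1)) then lab k₁ k₂ r (Sum.inr ((Sum.inr (Sum.inl x) : TI k₁ k₂), i, 1)) else 0)
        + (if (Sum.inl (c2 k₁ k₂) : VV k₁ k₂ r) ∈ ι k₁ k₂ r (Sum.inr ((Sum.inr (Sum.inl x) : TI k₁ k₂), i, 2)) then lab k₁ k₂ r (Sum.inr ((Sum.inr (Sum.inl x) : TI k₁ k₂), i, 2)) else 0)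
        + (if (Sum.inl (c2 k₁ k₂) : VV k₁ k₂ r) ∈ ι k₁ k₂ r (Sum.inr ((Sum.inr (Sum.inl x) : TI k₁ k₂), i, 3)) then lab k₁ k₂ r (Sum.inr ((Sum.inr (Sum.inl x) : TI k₁ k₂), i, 3)) else 0)
        + (if (Sum.inl (c2 k₁ k₂) : VV k₁ k₂ r) ∈ ι k₁ k₂ r (Sum.inr ((Sum.inr (Sum.inl x) : TI k₁ k₂), i, 4)) then lab k₁ k₂ r (Sum.inr ((Sum.inr (Sum.inl x) : TI k₁ k₂), i, 4)) else 0))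
      = 0 := by
    intro x i
    have hC : ¬ ((Sum.inl (c2 k₁ k₂) : VV k₁ k₂ r) = uCv k₁ k₂ r (Sum.inr (Sum.inl x))) := by
      simp [uCv, csd, c1, c2]
    have hL : ¬ ((Sum.inl (c2 k₁ k₂) : VV k₁ k₂ r) = uLv k₁ k₂ r (Sum.inr (Sum.inl x))) := by
      simp [uLv, lsd, c1, c2]
    simp only [mem_ι_q0, mem_ι_q1, mem_ι_q2, mem_ι_q3, mem_ι_q4,
      lab_q0, lab_q1, lab_q2, lab_q3, lab_q4]
    have c0 : ¬((Sum.inl (c2 k₁ k₂) : VV k₁ k₂ r) = w0v k₁ k₂ r (Sum.inr (Sum.inl x)) i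
        ∨ (Sum.inl (c2 k₁ k₂) : VV k₁ k₂ r) = w1v k₁ k₂ r (Sum.inr (Sum.inl x)) i) := by
      rintro (h | h) <;> simp [w0v, w1v] at h
    have c1' : ¬((Sum.inl (c2 k₁ k₂) : VV k₁ k₂ r) = uCv k₁ k₂ r (Sum.inr (Sum.inl x))
        ∨ (Sum.inl (c2 k₁ k₂) : VV k₁ k₂ r) = w0v k₁ k₂ r (Sum.inr (Sum.inl x)) i) := by
      rintro (h | h)
      · exact hC h
      · simp [w0v] at h
    have c2' : ¬((Sum.inl (c2 k₁ k₂) : VV k₁ k₂ r) = uCv k₁ k₂ r (Sum.inr (Sum.inl x))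
        ∨ (Sum.inl (c2 k₁ k₂) : VV k₁ k₂ r) = w1v k₁ k₂ r (Sum.inr (Sum.inl x)) i) := by
      rintro (h | h)
      · exact hC h
      · simp [w1v] at h
    have c3 : ¬((Sum.inl (c2 k₁ k₂) : VV k₁ k₂ r) = uLv k₁ k₂ r (Sum.inr (Sum.inl x))
        ∨ (Sum.inl (c2 k₁ k₂) : VV k₁ k₂ r) = w0v k₁ k₂ r (Sum.inr (Sum.inl x)) i) := by
      rintro (h | h)
      · exact hL h
      · simp [w0v] at h
    have c4 : ¬((Sum.inl (c2 k₁ k₂) : VV k₁ k₂ r) = uLv k₁ k₂ r (Sum.inr (Sum.inl x))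
        ∨ (Sum.inl (c2 k₁ k₂) : VV k₁ k₂ r) = w1v k₁ k₂ r (Sum.inr (Sum.inl x)) i) := by
      rintro (h | h)
      · exact hL h
      · simp [w1v] at h
    rw [if_neg c0, if_neg c1', if_neg c2', if_neg c3, if_neg c4]
  rw [e0, Finset.sum_congr rfl (fun x _ => e1 x), Finset.sum_congr rfl (fun y _ => e2 y),
    Finset.sum_congr rfl (fun i _ => hqL i),
    Finset.sum_congr rfl (fun x _ => Finset.sum_congr rfl (fun i _ => hqN x i)),
    Finset.sum_congr rfl (fun y _ => Finset.sum_congr rfl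
      (fun i _ => hqC (Sum.inr (Sum.inr y)) rfl i))]
  simp only [show η k₁ k₂ (Sum.inl () : TI k₁ k₂) = 0 from rfl,
    show ∀ y : Fin k₂, η k₁ k₂ (Sum.inr (Sum.inr y) : TI k₁ k₂) = k₁ + 1 + (y : ℕ)
      from fun _ => rfl]
  simp only [CSs, LSs, Finset.sum_const_zero, Finset.sum_add_distrib]
  omega

end WeightAux


section FinalAux

variable (k₁ k₂ r : ℕ)

lemma CSs_eq {e : ℕ} (he : e < nn k₁ k₂) :
    CSs k₁ k₂ r e = LSs k₁ k₂ r e + r * (NN k₁ k₂ r - 1) := by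
  have h : ∀ i : Fin r,
      labC k₁ k₂ r (sVal k₁ k₂ r e i) + labB k₁ k₂ r (sVal k₁ k₂ r e i)
        = (labA k₁ k₂ r (sVal k₁ k₂ r e i) + labD k₁ k₂ r (sVal k₁ k₂ r e i))
          + (NN k₁ k₂ r - 1) := by
    intro i
    have h1 := sVal_pos k₁ k₂ r e i
    have h2 := sVal_le k₁ k₂ r he i.isLt
    unfold labA labB labC labD
    omega
  rw [CSs, Finset.sum_congr rfl (fun i _ => h i), Finset.sum_add_distrib, Finset.sum_const,
    Finset.card_univ, Fintype.card_fin, smul_eq_mul, LSs]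

lemma LSs_Tsum {e : ℕ} (he : e < nn k₁ k₂) :
    LSs k₁ k₂ r e + Tsum k₁ k₂ r e = r * (6 * NN k₁ k₂ r + 2) := by
  have hT : Tsum k₁ k₂ r e = ∑ i : Fin r, sVal k₁ k₂ r e i :=
    (Fin.sum_univ_eq_sum_range _ _).symm
  rw [LSs, hT, ← Finset.sum_add_distrib]
  have h : ∀ i : Fin r,
      (labA k₁ k₂ r (sVal k₁ k₂ r e i) + labD k₁ k₂ r (sVal k₁ k₂ r e i))
        + sVal k₁ k₂ r e i = 6 * NN k₁ k₂ r + 2 := by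
    intro i
    have h1 := sVal_pos k₁ k₂ r e i
    have h2 := sVal_le k₁ k₂ r he i.isLt
    unfold labA labD
    omega
  rw [Finset.sum_congr rfl (fun i _ => h i), Finset.sum_const, Finset.card_univ,
    Fintype.card_fin, smul_eq_mul]

def Lval : ℕ := ptree k₁ k₂ r 1 + LSs k₁ k₂ r 1
def Tval : ℕ := Lval k₁ k₂ r + r * (NN k₁ k₂ r - 1)
def W1val : ℕ := ptree k₁ k₂ r 0 + CSs k₁ k₂ r 0 + k₁ * Tval k₁ k₂ r
def W2val : ℕ := ptree k₁ k₂ r 0 + LSs k₁ k₂ r 0 + k₂ * Tval k₁ k₂ r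

lemma ptree_pos {e : ℕ} (h1 : 1 ≤ e) : ptree k₁ k₂ r e = 5 * NN k₁ k₂ r + e := by
  unfold ptree; rw [if_neg (by omega)]

lemma Lf_const (hr : 1 ≤ r) {e : ℕ} (h1 : 1 ≤ e) (he : e < nn k₁ k₂) :
    ptree k₁ k₂ r e + LSs k₁ k₂ r e = Lval k₁ k₂ r := by
  have hn1 : 1 < nn k₁ k₂ := by omega
  have a1 := LSs_Tsum k₁ k₂ r he
  have a2 := LSs_Tsum k₁ k₂ r hn1
  have b1 := Tsum_eq k₁ k₂ r hr h1 he
  have b2 := Tsum_eq k₁ k₂ r hr le_rfl hn1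
  have c1 := ptree_pos k₁ k₂ r h1
  have c2 := ptree_pos k₁ k₂ r (le_refl 1)
  rw [Lval]
  omega

lemma T_const (hr : 1 ≤ r) {e : ℕ} (h1 : 1 ≤ e) (he : e < nn k₁ k₂) :
    ptree k₁ k₂ r e + CSs k₁ k₂ r e = Tval k₁ k₂ r := by
  have := Lf_const k₁ k₂ r hr h1 he
  have := CSs_eq k₁ k₂ r (e := e) he
  rw [Tval]
  omega

/-- the color of each vertex under our labeling -/
def wcls : VV k₁ k₂ r → ℕ
  | Sum.inl (Sum.inl (Sum.inl _)) => W1val k₁ k₂ r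
  | Sum.inl (Sum.inl (Sum.inr _)) => W2val k₁ k₂ r
  | Sum.inl (Sum.inr _) => Lval k₁ k₂ r
  | Sum.inr (_, (_, b)) => if b = 0 then 6 * NN k₁ k₂ r + 1 else 7 * NN k₁ k₂ r + 2

lemma weight_eq_wcls (hr : 1 ≤ r) (u : VV k₁ k₂ r) :
    weight (GG k₁ k₂ r) (ff k₁ k₂ r) u = wcls k₁ k₂ r u := by
  have hnn : nn k₁ k₂ = k₁ + k₂ + 1 := rfl
  rcases u with ((⟨⟩ | ⟨⟩) | l) | ⟨E, i, b⟩
  · show weight (GG k₁ k₂ r) (ff k₁ k₂ r) (Sum.inl (c1 k₁ k₂)) = W1val k₁ k₂ r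
    rw [weight_c1,
      Finset.sum_congr rfl (fun (x : Fin k₁) _ =>
        T_const k₁ k₂ r hr (by omega) (by have := x.isLt; omega)),
      Finset.sum_const, Finset.card_univ, Fintype.card_fin, smul_eq_mul]
    rw [W1val]
  · show weight (GG k₁ k₂ r) (ff k₁ k₂ r) (Sum.inl (c2 k₁ k₂)) = W2val k₁ k₂ r
    rw [weight_c2,
      Finset.sum_congr rfl (fun (y : Fin k₂) _ =>
        T_const k₁ k₂ r hr (by omega) (by have := y.isLt; omega)),
      Finset.sum_const, Finset.card_univ, Fintype.card_fin, smul_eq_mul]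
    rw [W2val]
  · show weight (GG k₁ k₂ r) (ff k₁ k₂ r) (Sum.inl (Sum.inr l)) = Lval k₁ k₂ r
    rw [weight_leaf]
    have h1 : 1 ≤ η k₁ k₂ (Sum.inr l) ∧ η k₁ k₂ (Sum.inr l) < nn k₁ k₂ := by
      rcases l with x | y
      · have := x.isLt; simp only [η]; omega
      · have := y.isLt; simp only [η]; omega
    exact Lf_const k₁ k₂ r hr h1.1 h1.2
  · obtain ⟨j, rfl⟩ := G0_repr k₁ k₂ E
    fin_cases b
    · show weight (GG k₁ k₂ r) (ff k₁ k₂ r) (w0v k₁ k₂ r j i) = 6 * NN k₁ k₂ r + 1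
      exact weight_w0 k₁ k₂ r j i
    · show weight (GG k₁ k₂ r) (ff k₁ k₂ r) (w1v k₁ k₂ r j i) = 7 * NN k₁ k₂ r + 2
      exact weight_w1 k₁ k₂ r j i

lemma vals_order (hk₁ : 1 ≤ k₁) (hk : k₁ ≤ k₂) (hr : 1 ≤ r) :
    6 * NN k₁ k₂ r + 1 < 7 * NN k₁ k₂ r + 2 ∧
    7 * NN k₁ k₂ r + 2 < Lval k₁ k₂ r ∧
    Lval k₁ k₂ r < W1val k₁ k₂ r ∧
    Lval k₁ k₂ r < W2val k₁ k₂ r ∧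
    W1val k₁ k₂ r ≠ W2val k₁ k₂ r := by
  have hnn : nn k₁ k₂ = k₁ + k₂ + 1 := rfl
  have hNN3 : 3 ≤ NN k₁ k₂ r := by
    have h := Nat.le_mul_of_pos_right (nn k₁ k₂) hr
    have : NN k₁ k₂ r = nn k₁ k₂ * r := rfl
    omega
  have hn1 : 1 < nn k₁ k₂ := by omega
  have hLS1 := LSs_Tsum k₁ k₂ r hn1
  have hTs1 := Tsum_le k₁ k₂ r hn1
  have hmul : r * (6 * NN k₁ k₂ r + 2) = r * NN k₁ k₂ r + r * (5 * NN k₁ k₂ r + 2) := by ring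
  have hmul2 : 5 * NN k₁ k₂ r + 2 ≤ r * (5 * NN k₁ k₂ r + 2) :=
    Nat.le_mul_of_pos_left _ hr
  have hp1 : ptree k₁ k₂ r 1 = 5 * NN k₁ k₂ r + 1 := ptree_pos k₁ k₂ r le_rfl
  have hLb : 10 * NN k₁ k₂ r + 3 ≤ Lval k₁ k₂ r := by rw [Lval]; omega
  have hrn : NN k₁ k₂ r - 1 ≤ r * (NN k₁ k₂ r - 1) := Nat.le_mul_of_pos_left _ hr
  have hTb : Lval k₁ k₂ r + 2 ≤ Tval k₁ k₂ r := by rw [Tval]; omega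
  have hk1T : Tval k₁ k₂ r ≤ k₁ * Tval k₁ k₂ r := Nat.le_mul_of_pos_left _ (by omega)
  have hk2T : Tval k₁ k₂ r ≤ k₂ * Tval k₁ k₂ r := Nat.le_mul_of_pos_left _ (by omega)
  have hCL0 := CSs_eq k₁ k₂ r (e := 0) (by omega)
  refine ⟨by omega, by omega, ?_, ?_, ?_⟩
  · rw [W1val]; omega
  · rw [W2val]; omega
  · rcases Nat.eq_or_lt_of_le hk with heq | hlt
    · subst heq
      rw [W1val, W2val]; omega
    · have hkT : (k₁ + 1) * Tval k₁ k₂ r ≤ k₂ * Tval k₁ k₂ r :=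
        Nat.mul_le_mul_right _ (by omega)
      have hexp : (k₁ + 1) * Tval k₁ k₂ r = k₁ * Tval k₁ k₂ r + Tval k₁ k₂ r := by ring
      rw [W1val, W2val, Tval]
      rw [Tval] at hkT hexp hk1T hk2T
      omega

lemma not_adj_leaf_leaf (l l' : Fin k₁ ⊕ Fin k₂) :
    ¬ (GG k₁ k₂ r).Adj (Sum.inl (Sum.inr l)) (Sum.inl (Sum.inr l')) := by
  intro h
  obtain ⟨hne, hrel⟩ := (SimpleGraph.fromRel_adj _ _ _).mp h
  have hadj : (doubleStar k₁ k₂).Adj (Sum.inr l) (Sum.inr l') :=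
    hrel.elim id (fun h' => h'.symm)
  obtain ⟨-, h2⟩ := (SimpleGraph.fromRel_adj _ _ _).mp hadj
  exact h2.elim (fun x => x) (fun x => x)

lemma not_adj_same_bit (E E' : (doubleStar k₁ k₂).edgeSet) (i i' : Fin r) (b : Fin 2) :
    ¬ (GG k₁ k₂ r).Adj (Sum.inr (E, (i, b))) (Sum.inr (E', (i', b))) := by
  intro h
  obtain ⟨hne, hrel⟩ := (SimpleGraph.fromRel_adj _ _ _).mp h
  rcases hrel with ⟨hE, hm⟩ | ⟨hE, hm⟩
  · obtain ⟨hne2, hf⟩ := (SimpleGraph.fromRel_adj _ _ _).mp hm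
    have hi : i = i' := by rcases hf with h' | h'; exacts [h', h'.symm]
    exact hne2 (by rw [hi])
  · obtain ⟨hne2, hf⟩ := (SimpleGraph.fromRel_adj _ _ _).mp hm
    have hi : i' = i := by rcases hf with h' | h'; exacts [h', h'.symm]
    exact hne2 (by rw [hi])

lemma adj_ne (hk₁ : 1 ≤ k₁) (hk : k₁ ≤ k₂) (hr : 1 ≤ r) :
    ∀ u v, (GG k₁ k₂ r).Adj u v →
      weight (GG k₁ k₂ r) (ff k₁ k₂ r) u ≠ weight (GG k₁ k₂ r) (ff k₁ k₂ r) v := by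
  obtain ⟨o1, o2, o3, o4, o5⟩ := vals_order k₁ k₂ r hk₁ hk hr
  intro u v hadj
  rw [weight_eq_wcls k₁ k₂ r hr, weight_eq_wcls k₁ k₂ r hr]
  rcases u with ((⟨⟩ | ⟨⟩) | l) | ⟨E, i, b⟩ <;>
    rcases v with ((⟨⟩ | ⟨⟩) | l') | ⟨E', i', b'⟩
  · exact absurd hadj ((GG k₁ k₂ r).irrefl)
  · show W1val k₁ k₂ r ≠ W2val k₁ k₂ r; exact o5
  · show W1val k₁ k₂ r ≠ Lval k₁ k₂ r; omega
  · show W1val k₁ k₂ r ≠ (if b' = 0 then 6 * NN k₁ k₂ r + 1 else 7 * NN k₁ k₂ r + 2)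
    split_ifs <;> omega
  · show W2val k₁ k₂ r ≠ W1val k₁ k₂ r; omega
  · exact absurd hadj ((GG k₁ k₂ r).irrefl)
  · show W2val k₁ k₂ r ≠ Lval k₁ k₂ r; omega
  · show W2val k₁ k₂ r ≠ (if b' = 0 then 6 * NN k₁ k₂ r + 1 else 7 * NN k₁ k₂ r + 2)
    split_ifs <;> omega
  · show Lval k₁ k₂ r ≠ W1val k₁ k₂ r; omega
  · show Lval k₁ k₂ r ≠ W2val k₁ k₂ r; omega
  · exact absurd hadj (not_adj_leaf_leaf k₁ k₂ r l l')
  · show Lval k₁ k₂ r ≠ (if b' = 0 then 6 * NN k₁ k₂ r + 1 else 7 * NN k₁ k₂ r + 2)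
    split_ifs <;> omega
  · show (if b = 0 then 6 * NN k₁ k₂ r + 1 else 7 * NN k₁ k₂ r + 2) ≠ W1val k₁ k₂ r
    split_ifs <;> omega
  · show (if b = 0 then 6 * NN k₁ k₂ r + 1 else 7 * NN k₁ k₂ r + 2) ≠ W2val k₁ k₂ r
    split_ifs <;> omega
  · show (if b = 0 then 6 * NN k₁ k₂ r + 1 else 7 * NN k₁ k₂ r + 2) ≠ Lval k₁ k₂ r
    split_ifs <;> omega
  · -- copy vs copy
    by_cases hbb : b = b'
    · subst hbb
      exact absurd hadj (not_adj_same_bit k₁ k₂ r E E' i i' b)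
    · show (if b = 0 then 6 * NN k₁ k₂ r + 1 else 7 * NN k₁ k₂ r + 2)
        ≠ (if b' = 0 then 6 * NN k₁ k₂ r + 1 else 7 * NN k₁ k₂ r + 2)
      fin_cases b <;> fin_cases b' <;> simp_all <;> omega

lemma wcls_mem (u : VV k₁ k₂ r) :
    wcls k₁ k₂ r u ∈ ({6 * NN k₁ k₂ r + 1, 7 * NN k₁ k₂ r + 2, Lval k₁ k₂ r,
      W1val k₁ k₂ r, W2val k₁ k₂ r} : Finset ℕ) := by
  rcases u with ((⟨⟩ | ⟨⟩) | l) | ⟨E, i, b⟩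
  · simp [wcls]
  · simp [wcls]
  · simp [wcls]
  · show (if b = 0 then 6 * NN k₁ k₂ r + 1 else 7 * NN k₁ k₂ r + 2) ∈ _
    split_ifs <;> simp

end FinalAux


/-- For all integers `k₁, k₂ ≥ 1` with `k₁ ≤ k₂` and every integer `r ≥ 1`,
the local antimagic chromatic number of the edge-corona product of the double
star `S_{k₁,k₂}` with `rK₂` satisfies `4 ≤ χ_la(S_{k₁,k₂} ⋄ rK₂) ≤ 5`. -/
theorem chiLA_doubleStar_edgeCorona_matching {k₁ k₂ r : ℕ} (hk₁ : 1 ≤ k₁)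
    (hk : k₁ ≤ k₂) (hr : 1 ≤ r) :
    4 ≤ chiLA (edgeCorona (doubleStar k₁ k₂) (matching r)) ∧
      chiLA (edgeCorona (doubleStar k₁ k₂) (matching r)) ≤ 5 := by
  have hla : IsLocalAntimagic (GG k₁ k₂ r) (ff k₁ k₂ r) :=
    ⟨ff_bijOn k₁ k₂ r, adj_ne k₁ k₂ r hk₁ hk hr⟩
  have hcc : colorCount (GG k₁ k₂ r) (ff k₁ k₂ r) ≤ 5 := by
    rw [colorCount]
    have hsub : Finset.univ.image (weight (GG k₁ k₂ r) (ff k₁ k₂ r))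
        ⊆ ({6 * NN k₁ k₂ r + 1, 7 * NN k₁ k₂ r + 2, Lval k₁ k₂ r,
            W1val k₁ k₂ r, W2val k₁ k₂ r} : Finset ℕ) := by
      intro v hv
      obtain ⟨u, -, rfl⟩ := Finset.mem_image.mp hv
      rw [weight_eq_wcls k₁ k₂ r hr]
      exact wcls_mem k₁ k₂ r u
    refine le_trans (Finset.card_le_card hsub) ?_
    refine le_trans (Finset.card_insert_le _ _) (Nat.succ_le_succ ?_)
    refine le_trans (Finset.card_insert_le _ _) (Nat.succ_le_succ ?_)
    refine le_trans (Finset.card_insert_le _ _) (Nat.succ_le_succ ?_)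
    refine le_trans (Finset.card_insert_le _ _) (Nat.succ_le_succ ?_)
    exact le_of_eq (Finset.card_singleton _)
  have hmemS : colorCount (GG k₁ k₂ r) (ff k₁ k₂ r) ∈
      {c | ∃ f, IsLocalAntimagic (GG k₁ k₂ r) f ∧ colorCount (GG k₁ k₂ r) f = c} :=
    ⟨ff k₁ k₂ r, hla, rfl⟩
  constructor
  · -- lower bound
    have hne : {c | ∃ f, IsLocalAntimagic (GG k₁ k₂ r) f ∧
        colorCount (GG k₁ k₂ r) f = c}.Nonempty := ⟨_, hmemS⟩
    obtain ⟨f, hf, hcnt⟩ := Nat.sInf_mem hne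
    rw [chiLA, ← hcnt]
    -- the four vertices of a K₄
    set i0 : Fin r := ⟨0, hr⟩
    set va : VV k₁ k₂ r := uCv k₁ k₂ r (Sum.inl ())
    set vb : VV k₁ k₂ r := uLv k₁ k₂ r (Sum.inl ())
    set vc : VV k₁ k₂ r := w0v k₁ k₂ r (Sum.inl ()) i0
    set vd : VV k₁ k₂ r := w1v k₁ k₂ r (Sum.inl ()) i0
    have hab := hf.2 va vb (adj_CL k₁ k₂ r (Sum.inl ()))
    have hac := hf.2 va vc (adj_C0 k₁ k₂ r (Sum.inl ()) i0)
    have had := hf.2 va vd (adj_C1 k₁ k₂ r (Sum.inl ()) i0)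
    have hbc := hf.2 vb vc (adj_L0 k₁ k₂ r (Sum.inl ()) i0)
    have hbd := hf.2 vb vd (adj_L1 k₁ k₂ r (Sum.inl ()) i0)
    have hcd := hf.2 vc vd (adj_01 k₁ k₂ r (Sum.inl ()) i0)
    set w := weight (GG k₁ k₂ r) f
    have hsub : ({w va, w vb, w vc, w vd} : Finset ℕ)
        ⊆ Finset.univ.image w := by
      intro x hx
      simp only [Finset.mem_insert, Finset.mem_singleton] at hx
      rcases hx with rfl | rfl | rfl | rfl <;>
        exact Finset.mem_image_of_mem _ (Finset.mem_univ _)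
    have hcard : ({w va, w vb, w vc, w vd} : Finset ℕ).card = 4 := by
      rw [Finset.card_insert_of_notMem (by simp [hab, hac, had]),
        Finset.card_insert_of_notMem (by simp [hbc, hbd]),
        Finset.card_insert_of_notMem (by simp [hcd]),
        Finset.card_singleton]
    calc 4 = ({w va, w vb, w vc, w vd} : Finset ℕ).card := hcard.symm
    _ ≤ (Finset.univ.image w).card := Finset.card_le_card hsub
    _ = colorCount (GG k₁ k₂ r) f := rfl
  · exact le_trans (Nat.sInf_le hmemS) hcc

end LocalAntimagic
end
end

section
/- For every integer k ≥ 2, the local antimagic total chromatic number of the star S_k equals 2. -/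
/-!
Local antimagic (total) labelings and chromatic numbers, firecracker graphs,
stars, double stars, joins, and edge-corona products.
-/

open scoped Classical

noncomputable section

namespace LocalAntimagic

variable {V : Type*} [Fintype V]

/-- The star `S_k` with one center (`Sum.inl`) and `k` leaves (`Sum.inr`). -/
def star (k : ℕ) : SimpleGraph (Unit ⊕ Fin k) := completeBipartiteGraph Unit (Fin k)

/-!
Label the center `1`, the spoke to leaf `i` (for `i < k`) by `i + 2` and leaf `i` by
`2k + 1 - i`; these labels run through `1`, `2, …, k + 1` and `k + 2, …, 2k + 1`. Every leaf
then has total weight `2k + 3`, while twice the weight of the center is `k² + 3k + 2`, which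
differs from `2(2k + 3)` because `k² = k + 4` has no solution in `ℕ`. So two colors suffice,
and since the center is adjacent to a leaf, two colors are needed.
-/

theorem two_le_totalColorCount {G : SimpleGraph V} {gv : V → ℕ} {ge : Sym2 V → ℕ}
    (h : IsLocalAntimagicTotal G gv ge) {u v : V} (huv : G.Adj u v) :
    2 ≤ totalColorCount G gv ge :=
  Finset.one_lt_card.mpr ⟨_, Finset.mem_image_of_mem _ (Finset.mem_univ u),
    _, Finset.mem_image_of_mem _ (Finset.mem_univ v), h.2 u v huv⟩

theorem chiLAT_eq_two_of_adj {G : SimpleGraph V} {u v : V} (huv : G.Adj u v)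
    {gv : V → ℕ} {ge : Sym2 V → ℕ} (h : IsLocalAntimagicTotal G gv ge)
    (hc : totalColorCount G gv ge ≤ 2) : chiLAT G = 2 := by
  have hc2 : totalColorCount G gv ge = 2 := hc.antisymm (two_le_totalColorCount h huv)
  apply le_antisymm
  · exact Nat.sInf_le ⟨gv, ge, h, hc2⟩
  · refine le_csInf ⟨2, gv, ge, h, hc2⟩ ?_
    rintro c ⟨gv', ge', h', rfl⟩
    exact two_le_totalColorCount h' huv

section Star

variable {k : ℕ}

theorem star_adj_inl_inr (i : Fin k) : (star k).Adj (Sum.inl ()) (Sum.inr i) := by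
  simp [star]

def spoke (k : ℕ) : Fin k ↪ Sym2 (Unit ⊕ Fin k) :=
  ⟨fun i => s(Sum.inl (), Sum.inr i), fun i j h => by simpa using h⟩

theorem spoke_apply (i : Fin k) : spoke k i = s(Sum.inl (), Sum.inr i) := rfl

theorem edgeSet_star : (star k).edgeSet = Set.range (spoke k) := by
  ext e
  induction e with
  | _ u v => cases u <;> cases v <;> simp [star, spoke_apply, eq_comm]

theorem edgeFinset_star : (star k).edgeFinset = Finset.univ.map (spoke k) := by
  ext e
  simp [edgeSet_star]

theorem card_edgeFinset_star : (star k).edgeFinset.card = k := by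
  simp [edgeFinset_star]

theorem weight_star_inl (f : Sym2 (Unit ⊕ Fin k) → ℕ) :
    weight (star k) f (Sum.inl ()) = ∑ i, f (spoke k i) := by
  simp [weight, edgeFinset_star, spoke_apply]

theorem weight_star_inr (f : Sym2 (Unit ⊕ Fin k) → ℕ) (j : Fin k) :
    weight (star k) f (Sum.inr j) = f (spoke k j) := by
  simp [weight, edgeFinset_star, spoke_apply]

def starVertexLabel (k : ℕ) : Unit ⊕ Fin k → ℕ :=
  Sum.elim (fun _ => 1) (fun i => 2 * k + 1 - i)

def starEdgeLabel (k : ℕ) : Sym2 (Unit ⊕ Fin k) → ℕ :=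
  Function.extend (spoke k) (fun i => i + 2) 0

theorem starEdgeLabel_spoke (i : Fin k) : starEdgeLabel k (spoke k i) = i + 2 :=
  (spoke k).injective.extend_apply _ _ _

theorem bijOn_starLabel : Set.BijOn (Sum.elim (starVertexLabel k) (starEdgeLabel k))
    (Set.range Sum.inl ∪ Sum.inr '' (star k).edgeSet) (Set.Icc 1 (2 * k + 1)) := by
  rw [edgeSet_star, ← Set.range_comp]
  refine ⟨?_, ?_, ?_⟩
  · rintro _ (⟨⟨⟩ | ⟨i, hi⟩, rfl⟩ | ⟨⟨i, hi⟩, rfl⟩) <;>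
      simp only [Set.mem_Icc, Function.comp_apply, Sum.elim_inl, Sum.elim_inr, starVertexLabel,
        starEdgeLabel_spoke] <;> omega
  · rintro _ (⟨⟨⟩ | ⟨i, hi⟩, rfl⟩ | ⟨⟨i, hi⟩, rfl⟩) _ (⟨⟨⟩ | ⟨j, hj⟩, rfl⟩ | ⟨⟨j, hj⟩, rfl⟩) hij <;>
      simp only [Function.comp_apply, Sum.elim_inl, Sum.elim_inr, starVertexLabel,
        starEdgeLabel_spoke, Sum.inl.injEq, Sum.inr.injEq, reduceCtorEq,
        EmbeddingLike.apply_eq_iff_eq, Fin.mk.injEq] at hij ⊢ <;> omega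
  · rintro m ⟨h1, h2⟩
    obtain rfl | ⟨hm2, hm⟩ | hm : m = 1 ∨ 2 ≤ m ∧ m ≤ k + 1 ∨ k + 1 < m := by omega
    · exact ⟨Sum.inl (Sum.inl ()), Or.inl ⟨_, rfl⟩, rfl⟩
    · refine ⟨Sum.inr (spoke k ⟨m - 2, by omega⟩), Or.inr ⟨_, rfl⟩, ?_⟩
      simp only [Sum.elim_inr, starEdgeLabel_spoke]
      omega
    · refine ⟨Sum.inl (Sum.inr ⟨2 * k + 1 - m, by omega⟩), Or.inl ⟨_, rfl⟩, ?_⟩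
      simp only [starVertexLabel, Sum.elim_inl, Sum.elim_inr]
      omega

theorem totalWeight_starLabel_inr (j : Fin k) :
    totalWeight (star k) (starVertexLabel k) (starEdgeLabel k) (Sum.inr j) = 2 * k + 3 := by
  rw [totalWeight, weight_star_inr, starEdgeLabel_spoke]
  simp only [starVertexLabel, Sum.elim_inr]
  omega

theorem two_mul_totalWeight_starLabel_inl :
    2 * totalWeight (star k) (starVertexLabel k) (starEdgeLabel k) (Sum.inl ()) =
      k * k + 3 * k + 2 := by
  have gauss := Finset.sum_range_id_mul_two k
  rw [totalWeight, weight_star_inl]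
  simp only [starVertexLabel, Sum.elim_inl, starEdgeLabel_spoke,
    Fin.sum_univ_eq_sum_range (fun i => i + 2), Finset.sum_add_distrib, Finset.sum_const,
    Finset.card_range, smul_eq_mul]
  cases k
  · rfl
  · rw [add_tsub_cancel_right] at gauss
    linarith

theorem totalWeight_starLabel_inl_ne :
    totalWeight (star k) (starVertexLabel k) (starEdgeLabel k) (Sum.inl ()) ≠ 2 * k + 3 := by
  intro h
  have hsq : k * k = k + 4 := by have := two_mul_totalWeight_starLabel_inl (k := k); omega
  rcases Nat.lt_or_ge k 3 with hk | hk
  · interval_cases k <;> omega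
  · nlinarith

theorem isLocalAntimagicTotal_starLabel :
    IsLocalAntimagicTotal (star k) (starVertexLabel k) (starEdgeLabel k) := by
  refine ⟨?_, ?_⟩
  · convert bijOn_starLabel using 2
    simp only [Fintype.card_sum, Fintype.card_unique, Fintype.card_fin, card_edgeFinset_star]
    omega
  · rintro (⟨⟩ | i) (⟨⟩ | j) huv
    · simp [star] at huv
    · rw [totalWeight_starLabel_inr]
      exact totalWeight_starLabel_inl_ne
    · rw [totalWeight_starLabel_inr]
      exact totalWeight_starLabel_inl_ne.symm
    · simp [star] at huv

theorem totalColorCount_starLabel_le :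
    totalColorCount (star k) (starVertexLabel k) (starEdgeLabel k) ≤ 2 := by
  refine (Finset.card_le_card (t := {totalWeight (star k) (starVertexLabel k) (starEdgeLabel k)
    (Sum.inl ()), 2 * k + 3}) ?_).trans Finset.card_le_two
  intro w hw
  obtain ⟨⟨⟩ | j, -, rfl⟩ := Finset.mem_image.mp hw <;> simp [totalWeight_starLabel_inr]

end Star

/-- For every integer `k ≥ 2`, the local antimagic total chromatic number of
the star `S_k` equals 2. -/
theorem chiLAT_star {k : ℕ} (hk : 2 ≤ k) : chiLAT (star k) = 2 :=
  chiLAT_eq_two_of_adj (star_adj_inl_inr ⟨0, by omega⟩) isLocalAntimagicTotal_starLabel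
    totalColorCount_starLabel_le

end LocalAntimagic
end
end
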